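/- arXiv:2209.04894 — 4 statements merged into one kernel-verified Lean document; each statement's English description precedes it below -/
import Mathlib

section
/- Fix an integer k ≥ 2. Let G be a semisimple k-SAT formula whose type is isomorphic to T_k. Then the 2-blowup G[2] contains a subformula that is simple and not minimal. -/
section Defs

variable {V W : Type*}

/-- A clause is a finite set of literals; a literal is a variable paired with a polarity
(`true` = positive, `false` = negative). -/
abbrev SatClause (V : Type*) := Finset (V × Bool)

/-- A formula is a finite set of clauses. -/
abbrev SatFormula (V : Type*) := Finset (SatClause V)

/-- The set of variables used by a clause. -/
def clauseVars [DecidableEq V] (C : SatClause V) : Finset V := C.image Prod.fst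

/-- A valid `k`-SAT clause: `k` literals on `k` distinct variables. -/
def IsKClause [DecidableEq V] (k : ℕ) (C : SatClause V) : Prop :=
  C.card = k ∧ (clauseVars C).card = k

/-- A valid `k`-SAT formula. -/
def IsKFormula [DecidableEq V] (k : ℕ) (G : SatFormula V) : Prop :=
  ∀ C ∈ G, IsKClause k C

/-- An assignment satisfies a clause if it makes all of its literals true. -/
def SatisfiesClause (a : V → Bool) (C : SatClause V) : Prop := ∀ l ∈ C, a l.1 = l.2

/-- A formula is minimal if every clause has a witness assignment satisfying it and no other
clause. -/
def MinimalFormula (G : SatFormula V) : Prop :=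
  ∀ C ∈ G, ∃ w : V → Bool, SatisfiesClause w C ∧ ∀ C' ∈ G, SatisfiesClause w C' → C' = C

/-- A formula is simple if no two distinct clauses use the same set of variables. -/
def SimpleFormula [DecidableEq V] (G : SatFormula V) : Prop :=
  ∀ C ∈ G, ∀ C' ∈ G, clauseVars C = clauseVars C' → C = C'

/-- A formula is unate if every variable occurs with only one polarity. -/
def UnateFormula (G : SatFormula V) : Prop :=
  ∀ x : V, ¬ ((∃ C ∈ G, (x, true) ∈ C) ∧ (∃ C ∈ G, (x, false) ∈ C))

/-- The set of variables used by a formula. -/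
def formulaVars [DecidableEq V] (G : SatFormula V) : Finset V := G.biUnion clauseVars

/-- `f` is a `k`-SAT function: it is computed by some `k`-SAT formula (value `1` iff some
clause has all its literals satisfied). -/
def IsKSatFunction (k n : ℕ) (f : (Fin n → Bool) → Bool) : Prop :=
  ∃ G : SatFormula (Fin n), IsKFormula k G ∧
    ∀ a : Fin n → Bool, f a = true ↔ ∃ C ∈ G, SatisfiesClause a C

/-- Relabel the variables of a formula along `φ`. -/
def mapFormula [DecidableEq V] [DecidableEq W] (φ : W → V) (F : SatFormula W) : SatFormula V :=
  F.image (fun C => C.image (fun l => (φ l.1, l.2)))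

/-- `G'` is a copy of `F`: it is obtained from `F` by an injective relabeling of variables. -/
def IsCopyOf [DecidableEq V] [DecidableEq W] (F : SatFormula W) (G' : SatFormula V) : Prop :=
  ∃ φ : W → V, Set.InjOn φ ↑(formulaVars F) ∧ G' = mapFormula φ F

/-- The number of copies of `F` in `G`, i.e. of subformulae of `G` isomorphic to `F`. -/
noncomputable def copyCount [DecidableEq V] [DecidableEq W] (F : SatFormula W)
    (G : SatFormula V) : ℕ :=
  Set.ncard {G' : SatFormula V | G' ⊆ G ∧ IsCopyOf F G'}

/-- The `b`-blowup of a clause: replace each literal by the literal of the same polarity on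
one of the `b` duplicates of its variable, in all possible ways. -/
def clauseBlowup [DecidableEq V] (b : ℕ) (C : SatClause V) :
    Finset (SatClause (V × Fin b)) :=
  (C.pi (fun _ => (Finset.univ : Finset (Fin b)))).image
    (fun g => C.attach.image (fun l => ((l.1.1, g l.1 l.2), l.1.2)))

/-- The `b`-blowup of a formula. -/
def formulaBlowup [DecidableEq V] (b : ℕ) (G : SatFormula V) : SatFormula (V × Fin b) :=
  G.biUnion (clauseBlowup b)

/-- The weight of a formula on `n` variables:
`wt(G) = Σ_i log₂(i+1)·α_i(G)` where `α_i(G)·C(n,k)` counts the `k`-sets of variables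
supporting exactly `i` clauses. -/
noncomputable def formulaWt (k n : ℕ) (G : SatFormula (Fin n)) : ℝ :=
  (∑ S ∈ (Finset.univ : Finset (Fin n)).powersetCard k,
    Real.logb 2 (((G.filter (fun C => clauseVars C = S)).card : ℝ) + 1)) / (n.choose k)

/-- A partially directed graph: a set of undirected edges together with a set of directed
(pointed) edges. -/
structure PDG (V : Type*) where
  undir : Finset (Finset V)
  dir : Finset (Finset V × V)

/-- `H` is a valid `k`-PDG: all edges have `k` vertices, each directed edge is pointed at one
of its vertices, and each `k`-set carries at most one edge (undirected or directed). -/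
def PDG.IsValid (k : ℕ) (H : PDG V) : Prop :=
  (∀ e ∈ H.undir, e.card = k) ∧
  (∀ p ∈ H.dir, p.1.card = k ∧ p.2 ∈ p.1) ∧
  (∀ p ∈ H.dir, p.1 ∉ H.undir) ∧
  (∀ p ∈ H.dir, ∀ q ∈ H.dir, p.1 = q.1 → p = q)

/-- `F` is a subgraph of `H`: a copy of `F` can be obtained from `H` by deleting vertices,
deleting edges, and/or forgetting directions of edges. -/
def PDG.IsSubgraph [DecidableEq V] (F : PDG W) (H : PDG V) : Prop :=
  ∃ φ : W → V, Function.Injective φ ∧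
    (∀ e ∈ F.undir, e.image φ ∈ H.undir ∨ ∃ v, (e.image φ, v) ∈ H.dir) ∧
    (∀ p ∈ F.dir, (p.1.image φ, φ p.2) ∈ H.dir)

/-- The image of a PDG under a relabeling of vertices. -/
def PDG.map [DecidableEq V] (φ : W → V) (F : PDG W) : PDG V :=
  ⟨F.undir.image (Finset.image φ), F.dir.image (fun p => (p.1.image φ, φ p.2))⟩

/-- The PDG `T_k` on vertex set `{0, …, k}` (0-indexed): undirected edges everything-but-`k`
and everything-but-`k-2`, and the edge everything-but-`k-1` directed toward `k`. -/
def TkPDG (k : ℕ) : PDG (Fin (k + 1)) where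
  undir := { Finset.univ.erase ⟨k, Nat.lt_succ_self k⟩,
             Finset.univ.erase ⟨k - 2, by omega⟩ }
  dir := { (Finset.univ.erase ⟨k - 1, by omega⟩, ⟨k, Nat.lt_succ_self k⟩) }

/-- A semisimple formula: every `k`-set of variables supports at most one clause, or exactly
two clauses whose polarities differ on exactly one variable. -/
def SemisimpleFormula [DecidableEq V] (G : SatFormula V) : Prop :=
  ∀ C₁ ∈ G, ∀ C₂ ∈ G, C₁ ≠ C₂ → clauseVars C₁ = clauseVars C₂ →
    (((C₁ \ C₂).image Prod.fst).card = 1 ∧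
      ∀ C₃ ∈ G, clauseVars C₃ = clauseVars C₁ → C₃ = C₁ ∨ C₃ = C₂)

/-- The type of a (semisimple) formula: an undirected edge on each variable set supporting
exactly one clause, and for each variable set supporting two clauses a directed edge pointed
at the variable where the two clauses differ. -/
def formulaType [DecidableEq V] (G : SatFormula V) : PDG V where
  undir := (G.filter (fun C => ∀ C' ∈ G, clauseVars C' = clauseVars C → C' = C)).image
    clauseVars
  dir := ((G ×ˢ G).filter (fun p => p.1 ≠ p.2 ∧ clauseVars p.1 = clauseVars p.2)).biUnion
    (fun p => ((p.1 \ p.2).image Prod.fst).image (fun v => (clauseVars p.1, v)))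

end Defs
section Aux
variable {V : Type*} [DecidableEq V]

/-- Blowup of a clause along a copy-assignment function. -/
def blowC (f : V → Fin 2) (C : SatClause V) : SatClause (V × Fin 2) :=
  C.image (fun l => ((l.1, f l.1), l.2))

lemma blowC_mem_clauseBlowup (f : V → Fin 2) (C : SatClause V) :
    blowC f C ∈ clauseBlowup 2 C := by
  unfold clauseBlowup
  rw [Finset.mem_image]
  refine ⟨fun l _ => f l.1, ?_, ?_⟩
  · simp [Finset.mem_pi]
  · show C.attach.image (fun l => ((l.1.1, f l.1.1), l.1.2)) = blowC f C
    unfold blowC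
    rw [show (fun (l : {x // x ∈ C}) => ((l.1.1, f l.1.1), l.1.2)) =
      (fun (l : V × Bool) => ((l.1, f l.1), l.2)) ∘ Subtype.val from rfl,
      ← Finset.image_image, Finset.attach_image_val]

lemma blowC_mem_blowup {G : SatFormula V} {C : SatClause V} (hC : C ∈ G) (f : V → Fin 2) :
    blowC f C ∈ formulaBlowup 2 G := by
  unfold formulaBlowup
  rw [Finset.mem_biUnion]
  exact ⟨C, hC, blowC_mem_clauseBlowup f C⟩

lemma vars_blowC (f : V → Fin 2) (C : SatClause V) :
    clauseVars (blowC f C) = (clauseVars C).image (fun v => (v, f v)) := by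
  unfold clauseVars blowC
  rw [Finset.image_image, Finset.image_image]
  rfl

lemma mem_vars_blowC {f : V → Fin 2} {C : SatClause V} {p : V × Fin 2} :
    p ∈ clauseVars (blowC f C) ↔ ∃ v ∈ clauseVars C, (v, f v) = p := by
  rw [vars_blowC, Finset.mem_image]

lemma sat_blowC {w : V × Fin 2 → Bool} {f : V → Fin 2} {C : SatClause V} :
    SatisfiesClause w (blowC f C) ↔ ∀ l ∈ C, w (l.1, f l.1) = l.2 := by
  unfold SatisfiesClause blowC
  constructor
  · intro h l hl; exact h _ (Finset.mem_image_of_mem _ hl)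
  · intro h l' hl'
    rw [Finset.mem_image] at hl'
    obtain ⟨l, hl, rfl⟩ := hl'
    exact h l hl

lemma var_mem_of_mem {l : V × Bool} {C : SatClause V} (h : l ∈ C) : l.1 ∈ clauseVars C :=
  Finset.mem_image_of_mem _ h

lemma not_lit_mem {v : V} {b : Bool} {C : SatClause V} (h : v ∉ clauseVars C) : (v, b) ∉ C :=
  fun hc => h (var_mem_of_mem hc)

/-- The polarity of a clause on a variable. -/
def polW (C : SatClause V) (v : V) : Bool := if (v, true) ∈ C then true else false

lemma polW_mem {C : SatClause V} {v : V} (h : v ∈ clauseVars C) : (v, polW C v) ∈ C := by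
  unfold polW
  split_ifs with ht
  · exact ht
  · obtain ⟨l, hl, rfl⟩ := Finset.mem_image.mp h
    cases hb : l.2
    · rw [show (l.1, false) = l from by rw [← hb]]; exact hl
    · exact absurd (by rw [← hb]; exact hl) ht

lemma polW_eq {C : SatClause V} (hinj : ∀ l ∈ C, ∀ l' ∈ C, l.1 = l'.1 → l = l')
    {l : V × Bool} (h : l ∈ C) : l.2 = polW C l.1 := by
  have := hinj l h (l.1, polW C l.1) (polW_mem (var_mem_of_mem h)) rfl
  exact congrArg Prod.snd this

lemma vars_ne_of_mem_not_mem {A B : SatClause (V × Fin 2)} {p : V × Fin 2}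
    (hA : p ∈ clauseVars A) (hB : p ∉ clauseVars B) : A ≠ B := by
  rintro rfl; exact hB hA

end Aux
section Main
variable {V : Type*} [DecidableEq V]

lemma glue (G : SatFormula V) (H : SatFormula (V × Fin 2))
    (hsub : H ⊆ formulaBlowup 2 G) (hsimple : SimpleFormula H)
    (X : SatClause (V × Fin 2)) (hX : X ∈ H)
    (hcov : ∀ w : V × Fin 2 → Bool, SatisfiesClause w X →
      ∃ C' ∈ H, C' ≠ X ∧ SatisfiesClause w C') :
    ∃ H ⊆ formulaBlowup 2 G, SimpleFormula H ∧ ¬ MinimalFormula H := by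
  refine ⟨H, hsub, hsimple, fun hmin => ?_⟩
  obtain ⟨w, hw1, hw2⟩ := hmin X hX
  obtain ⟨C', hC', hne, hsat⟩ := hcov w hw1
  exact hne (hw2 C' hC' hsat)

lemma vne {A B : SatClause (V × Fin 2)} {p : V × Fin 2}
    (h1 : p ∈ clauseVars A) (h2 : p ∉ clauseVars B) :
    ¬ (clauseVars A = clauseVars B) := fun h => h2 (h ▸ h1)

lemma bool_resolve {a b : Bool} (h : a ≠ b) : a = !b := by
  cases a <;> cases b <;> simp_all

lemma case_two (G : SatFormula V)
    (P D E : SatClause V) (z y : V) (b : Bool)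
    (hCC : insert (z, b) P ∈ G) (hD : D ∈ G) (hE : E ∈ G)
    (hPinj : ∀ l ∈ P, ∀ l' ∈ P, l.1 = l'.1 → l = l')
    (hDinj : ∀ l ∈ D, ∀ l' ∈ D, l.1 = l'.1 → l = l')
    (hEinj : ∀ l ∈ E, ∀ l' ∈ E, l.1 = l'.1 → l = l')
    (hzP : z ∉ clauseVars P) (hyP : y ∉ clauseVars P) (hyz : y ≠ z)
    (hyD : y ∈ clauseVars D) (hyE : y ∈ clauseVars E)
    (hzE : (z, !b) ∈ E) (hzD : z ∉ clauseVars D)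
    (hEsub : ∀ v ∈ clauseVars E, v ≠ y → v ≠ z → v ∈ clauseVars P)
    (hPD : clauseVars P ⊆ clauseVars D)
    (hcase : polW D y = polW E y) :
    ∃ H ⊆ formulaBlowup 2 G, SimpleFormula H ∧ ¬ MinimalFormula H := by
  classical
  set CC : SatClause V := insert (z, b) P with hCCdef
  set X : SatClause (V × Fin 2) := blowC (fun _ => 0) D with hXdef
  set Hf : V → SatClause (V × Fin 2) :=
    fun v0 => blowC (fun v => if v = v0 then 1 else 0) D with hHfdef
  set fC : V → Fin 2 := fun v => if (v, polW P v) ∈ D then 0 else 1 with hfCdef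
  set fE : V → Fin 2 := fun v => if (v, polW E v) ∈ D then 0 else 1 with hfEdef
  set CCb : SatClause (V × Fin 2) := blowC fC CC with hCCbdef
  set EEb : SatClause (V × Fin 2) := blowC fE E with hEEbdef
  set H : SatFormula (V × Fin 2) :=
    insert X (insert CCb (insert EEb ((clauseVars P).image Hf))) with hHdef
  -- variable membership facts
  have hzCC : z ∈ clauseVars CC := var_mem_of_mem (Finset.mem_insert_self _ _)
  have hfCz : fC z = 1 := by
    simp only [hfCdef]
    rw [if_neg (not_lit_mem hzD)]
  have hfEz : fE z = 1 := by
    simp only [hfEdef]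
    rw [if_neg (not_lit_mem hzD)]
  have hfEy : fE y = 0 := by
    simp only [hfEdef]
    rw [if_pos]
    rw [← hcase]
    exact polW_mem hyD
  have hyCC : y ∉ clauseVars CC := by
    intro hy
    obtain ⟨l, hl, rfl⟩ := Finset.mem_image.mp hy
    rcases Finset.mem_insert.mp hl with h | h
    · exact hyz (by rw [h])
    · exact hyP (var_mem_of_mem h)
  have hz1CCb : (z, (1 : Fin 2)) ∈ clauseVars CCb :=
    mem_vars_blowC.mpr ⟨z, hzCC, by rw [hfCz]⟩
  have hz1EEb : (z, (1 : Fin 2)) ∈ clauseVars EEb :=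
    mem_vars_blowC.mpr ⟨z, var_mem_of_mem hzE, by rw [hfEz]⟩
  have hzD' : ∀ (f : V → Fin 2) (c : Fin 2), (z, c) ∉ clauseVars (blowC f D) := by
    intro f c h
    obtain ⟨v, hv, heq⟩ := mem_vars_blowC.mp h
    exact hzD (by rw [show v = z from congrArg Prod.fst heq] at hv; exact hv)
  have hy0EEb : (y, (0 : Fin 2)) ∈ clauseVars EEb :=
    mem_vars_blowC.mpr ⟨y, hyE, by rw [hfEy]⟩
  have hyCCb : ∀ c : Fin 2, (y, c) ∉ clauseVars CCb := by
    intro c h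
    obtain ⟨v, hv, heq⟩ := mem_vars_blowC.mp h
    exact hyCC (by rw [show v = y from congrArg Prod.fst heq] at hv; exact hv)
  have hv1Hf : ∀ v0 ∈ clauseVars P, (v0, (1 : Fin 2)) ∈ clauseVars (Hf v0) := by
    intro v0 hv0
    exact mem_vars_blowC.mpr ⟨v0, hPD hv0, by simp⟩
  have hv1X : ∀ v0 : V, (v0, (1 : Fin 2)) ∉ clauseVars X := by
    intro v0 h
    obtain ⟨v, hv, heq⟩ := mem_vars_blowC.mp h
    have : (0 : Fin 2) = 1 := congrArg Prod.snd heq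
    exact absurd this (by decide)
  have hHfinj : ∀ v0 v1 : V, (v0, (1 : Fin 2)) ∈ clauseVars (Hf v1) → v0 = v1 := by
    intro v0 v1 h
    obtain ⟨v, hv, heq⟩ := mem_vars_blowC.mp h
    obtain ⟨h1, h2⟩ := Prod.mk.injEq .. ▸ heq
    by_contra hne
    rw [h1] at h2
    rw [if_neg hne] at h2
    exact absurd h2 (by decide)
  -- membership characterization
  have hmem : ∀ C ∈ H, C = X ∨ C = CCb ∨ C = EEb ∨ ∃ v0 ∈ clauseVars P, C = Hf v0 := by
    intro C hC
    simp only [hHdef, Finset.mem_insert, Finset.mem_image] at hC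
    rcases hC with h | h | h | ⟨v0, hv0, h⟩
    · exact Or.inl h
    · exact Or.inr (Or.inl h)
    · exact Or.inr (Or.inr (Or.inl h))
    · exact Or.inr (Or.inr (Or.inr ⟨v0, hv0, h.symm⟩))
  have hXmem : X ∈ H := Finset.mem_insert_self _ _
  refine glue G H ?_ ?_ X hXmem ?_
  · -- subset of blowup
    intro C hC
    rcases hmem C hC with rfl | rfl | rfl | ⟨v0, hv0, rfl⟩
    · exact blowC_mem_blowup hD _
    · exact blowC_mem_blowup hCC _
    · exact blowC_mem_blowup hE _
    · exact blowC_mem_blowup hD _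
  · -- simple
    intro C hC C' hC' hv
    rcases hmem C hC with rfl | rfl | rfl | ⟨v0, hv0, rfl⟩ <;>
      rcases hmem C' hC' with rfl | rfl | rfl | ⟨v1, hv1, rfl⟩
    · rfl
    · exact absurd hv.symm (vne hz1CCb (hzD' _ _))
    · exact absurd hv.symm (vne hz1EEb (hzD' _ _))
    · exact absurd hv.symm (vne (hv1Hf v1 hv1) (hv1X v1))
    · exact absurd hv (vne hz1CCb (hzD' _ _))
    · rfl
    · exact absurd hv.symm (vne hy0EEb (hyCCb _))
    · exact absurd hv (vne hz1CCb (hzD' _ _))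
    · exact absurd hv (vne hz1EEb (hzD' _ _))
    · exact absurd hv (vne hy0EEb (hyCCb _))
    · rfl
    · exact absurd hv (vne hz1EEb (hzD' _ _))
    · exact absurd hv (vne (hv1Hf v0 hv0) (hv1X v0))
    · exact absurd hv.symm (vne hz1CCb (hzD' _ _))
    · exact absurd hv.symm (vne hz1EEb (hzD' _ _))
    · rw [hHfinj v0 v1 (hv ▸ hv1Hf v0 hv0)]
  · -- coverage
    intro w hwX
    rw [sat_blowC] at hwX
    by_cases h2 : ∃ l ∈ P, w (l.1, 1) = polW D l.1
    · obtain ⟨l, hlP, hw⟩ := h2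
      refine ⟨Hf l.1, ?_, ?_, ?_⟩
      · simp only [hHdef, Finset.mem_insert, Finset.mem_image]
        exact Or.inr (Or.inr (Or.inr ⟨l.1, var_mem_of_mem hlP, rfl⟩))
      · exact vars_ne_of_mem_not_mem (hv1Hf l.1 (var_mem_of_mem hlP)) (hv1X l.1)
      · rw [sat_blowC]
        intro l' hl'
        by_cases hfst : l'.1 = l.1
        · rw [hfst, if_pos rfl]
          rw [hw, ← hfst]
          exact (polW_eq hDinj hl').symm
        · rw [if_neg hfst]
          exact hwX l' hl'
    · push_neg at h2
      have haP : ∀ l ∈ P, w (l.1, 1) = !(polW D l.1) :=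
        fun l hl => bool_resolve (h2 l hl)
      by_cases h3 : w (z, 1) = !b
      · -- EEb
        refine ⟨EEb, ?_, ?_, ?_⟩
        · simp only [hHdef, Finset.mem_insert]; tauto
        · exact vars_ne_of_mem_not_mem hz1EEb (hzD' _ _)
        · rw [sat_blowC]
          intro l hl
          by_cases hlz : l.1 = z
          · have : l = (z, !b) := hEinj l hl (z, !b) hzE hlz
            rw [this] at hl ⊢
            simpa [hfEz] using h3
          · by_cases hly : l.1 = y
            · have hl2 : l.2 = polW E l.1 := polW_eq hEinj hl
              rw [hly] at hl2 ⊢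
              rw [hfEy, hl2, ← hcase]
              exact hwX (y, polW D y) (polW_mem hyD)
            · have hlP : l.1 ∈ clauseVars P := hEsub l.1 (var_mem_of_mem hl) hly hlz
              have hl2 : l.2 = polW E l.1 := polW_eq hEinj hl
              simp only [hfEdef]
              by_cases hmD : (l.1, polW E l.1) ∈ D
              · rw [if_pos hmD]
                rw [hl2]
                exact hwX (l.1, polW E l.1) hmD
              · rw [if_neg hmD]
                have := haP (l.1, polW P l.1) (polW_mem hlP)
                rw [this, hl2]
                have hDl : (l.1, polW D l.1) ∈ D := polW_mem (hPD hlP)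
                have : polW E l.1 ≠ polW D l.1 := fun h => hmD (h ▸ hDl)
                rw [bool_resolve this]
      · -- CCb
        have h3' : w (z, 1) = b := by
          have := bool_resolve h3; simpa using this
        refine ⟨CCb, ?_, ?_, ?_⟩
        · simp only [hHdef, Finset.mem_insert]; tauto
        · exact vars_ne_of_mem_not_mem hz1CCb (hzD' _ _)
        · rw [sat_blowC]
          intro l hl
          rcases Finset.mem_insert.mp hl with rfl | hlP
          · simpa [hfCz] using h3'
          · have hlz : l.1 ≠ z := fun h => hzP (h ▸ var_mem_of_mem hlP)
            have hl2 : l.2 = polW P l.1 := polW_eq hPinj hlP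
            simp only [hfCdef]
            by_cases hmD : (l.1, polW P l.1) ∈ D
            · rw [if_pos hmD, hl2]
              exact hwX (l.1, polW P l.1) hmD
            · rw [if_neg hmD]
              rw [haP l hlP, hl2]
              have hDl : (l.1, polW D l.1) ∈ D := polW_mem (hPD (var_mem_of_mem hlP))
              have : polW P l.1 ≠ polW D l.1 := fun h => hmD (h ▸ hDl)
              rw [bool_resolve this]
lemma case_one {V : Type*} [DecidableEq V] (G : SatFormula V)
    (P D E : SatClause V) (z y : V) (b : Bool)
    (hCC : insert (z, b) P ∈ G) (hD : D ∈ G) (hE : E ∈ G)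
    (hPinj : ∀ l ∈ P, ∀ l' ∈ P, l.1 = l'.1 → l = l')
    (hDinj : ∀ l ∈ D, ∀ l' ∈ D, l.1 = l'.1 → l = l')
    (hEinj : ∀ l ∈ E, ∀ l' ∈ E, l.1 = l'.1 → l = l')
    (hzP : z ∉ clauseVars P) (hyP : y ∉ clauseVars P) (hyz : y ≠ z)
    (hyD : y ∈ clauseVars D) (hyE : y ∈ clauseVars E)
    (hzE : (z, !b) ∈ E) (hzD : z ∉ clauseVars D)
    (hDsub : ∀ v ∈ clauseVars D, v ≠ y → v ∈ clauseVars P)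
    (hEsub : ∀ v ∈ clauseVars E, v ≠ y → v ≠ z → v ∈ clauseVars P)
    (hcase : polW D y ≠ polW E y) :
    ∃ H ⊆ formulaBlowup 2 G, SimpleFormula H ∧ ¬ MinimalFormula H := by
  classical
  set CC : SatClause V := insert (z, b) P with hCCdef
  set f0 : V → Fin 2 := fun v => if v = z then 1 else 0 with hf0def
  set X : SatClause (V × Fin 2) := blowC f0 CC with hXdef
  set W1 : SatClause (V × Fin 2) := blowC (fun _ => 0) CC with hW1def
  set Hf : V → SatClause (V × Fin 2) :=
    fun v0 => blowC (fun v => if v = v0 then 1 else f0 v) CC with hHfdef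
  set fD : V → Fin 2 := fun v => if (v, polW D v) ∈ P then 0 else 1 with hfDdef
  set fE : V → Fin 2 :=
    fun v => if v = z then 0 else if (v, polW E v) ∈ P then 0 else 1 with hfEdef
  set DD : SatClause (V × Fin 2) := blowC fD D with hDDdef
  set EE : SatClause (V × Fin 2) := blowC fE E with hEEdef
  set H : SatFormula (V × Fin 2) :=
    insert X (insert W1 (insert DD (insert EE ((clauseVars P).image Hf)))) with hHdef
  have hzCC : z ∈ clauseVars CC := var_mem_of_mem (Finset.mem_insert_self _ _)
  have hPCC : ∀ l ∈ P, l ∈ CC := fun l hl => Finset.mem_insert_of_mem hl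
  have hf0z : f0 z = 1 := by simp [hf0def]
  have hf0ne : ∀ v : V, v ≠ z → f0 v = 0 := by
    intro v hv; simp [hf0def, hv]
  have hfDy : fD y = 1 := by
    simp only [hfDdef]; rw [if_neg (not_lit_mem hyP)]
  have hfEy : fE y = 1 := by
    simp only [hfEdef]; rw [if_neg hyz, if_neg (not_lit_mem hyP)]
  have hfEz : fE z = 0 := by simp [hfEdef]
  have hyCC : y ∉ clauseVars CC := by
    intro hy
    obtain ⟨l, hl, rfl⟩ := Finset.mem_image.mp hy
    rcases Finset.mem_insert.mp hl with h | h
    · exact hyz (by rw [h])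
    · exact hyP (var_mem_of_mem h)
  -- membership facts
  have hz1X : (z, (1 : Fin 2)) ∈ clauseVars X :=
    mem_vars_blowC.mpr ⟨z, hzCC, by rw [hf0z]⟩
  have hnotz0 : ∀ f : V → Fin 2, f z = 1 → (z, (0 : Fin 2)) ∉ clauseVars (blowC f CC) := by
    intro f hf h
    obtain ⟨v, hv, heq⟩ := mem_vars_blowC.mp h
    have hvz : v = z := congrArg Prod.fst heq
    rw [hvz, hf] at heq
    have h2 : (1 : Fin 2) = 0 := congrArg Prod.snd heq
    exact absurd h2 (by decide)
  have hsnd0 : ∀ (C : SatClause V) (v : V),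
      (v, (1 : Fin 2)) ∉ clauseVars (blowC (fun _ => (0 : Fin 2)) C) := by
    intro C v h
    obtain ⟨u, hu, heq⟩ := mem_vars_blowC.mp h
    have h2 : (0 : Fin 2) = 1 := congrArg Prod.snd heq
    exact absurd h2 (by decide)
  have hyblowCC : ∀ (f : V → Fin 2) (c : Fin 2), (y, c) ∉ clauseVars (blowC f CC) := by
    intro f c h
    obtain ⟨v, hv, heq⟩ := mem_vars_blowC.mp h
    exact hyCC (by rw [show v = y from congrArg Prod.fst heq] at hv; exact hv)
  have hzblowD : ∀ (f : V → Fin 2) (c : Fin 2), (z, c) ∉ clauseVars (blowC f D) := by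
    intro f c h
    obtain ⟨v, hv, heq⟩ := mem_vars_blowC.mp h
    exact hzD (by rw [show v = z from congrArg Prod.fst heq] at hv; exact hv)
  have hy1DD : (y, (1 : Fin 2)) ∈ clauseVars DD :=
    mem_vars_blowC.mpr ⟨y, hyD, by rw [hfDy]⟩
  have hy1EE : (y, (1 : Fin 2)) ∈ clauseVars EE :=
    mem_vars_blowC.mpr ⟨y, hyE, by rw [hfEy]⟩
  have hz0EE : (z, (0 : Fin 2)) ∈ clauseVars EE :=
    mem_vars_blowC.mpr ⟨z, var_mem_of_mem hzE, by rw [hfEz]⟩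
  have hz1Hf : ∀ v0 ∈ clauseVars P, (z, (1 : Fin 2)) ∈ clauseVars (Hf v0) := by
    intro v0 hv0
    refine mem_vars_blowC.mpr ⟨z, hzCC, ?_⟩
    rw [if_neg (fun h => hzP (by rw [h]; exact hv0)), hf0z]
  have hz0Hf : ∀ v0 ∈ clauseVars P, (z, (0 : Fin 2)) ∉ clauseVars (Hf v0) := by
    intro v0 hv0
    refine hnotz0 _ ?_
    rw [if_neg (fun h => hzP (by rw [h]; exact hv0)), hf0z]
  have hv1Hf : ∀ v0 ∈ clauseVars P, (v0, (1 : Fin 2)) ∈ clauseVars (Hf v0) := by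
    intro v0 hv0
    obtain ⟨l, hl, rfl⟩ := Finset.mem_image.mp hv0
    exact mem_vars_blowC.mpr ⟨l.1, var_mem_of_mem (hPCC l hl), by rw [if_pos rfl]⟩
  have hv1X : ∀ v0 ∈ clauseVars P, (v0, (1 : Fin 2)) ∉ clauseVars X := by
    intro v0 hv0 h
    obtain ⟨v, hv, heq⟩ := mem_vars_blowC.mp h
    have hvv : v = v0 := congrArg Prod.fst heq
    have : f0 v = 1 := congrArg Prod.snd heq
    rw [hf0ne v (fun hvz => hzP (by rw [← hvv, hvz] at hv0; exact hv0))] at this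
    exact absurd this (by decide)
  have hHfinj : ∀ v0 ∈ clauseVars P, ∀ v1 : V,
      (v0, (1 : Fin 2)) ∈ clauseVars (Hf v1) → v0 = v1 := by
    intro v0 hv0 v1 h
    obtain ⟨v, hv, heq⟩ := mem_vars_blowC.mp h
    have h1 : v = v0 := congrArg Prod.fst heq
    have h2 : (if v = v1 then (1 : Fin 2) else f0 v) = 1 := congrArg Prod.snd heq
    by_contra hne
    rw [h1, if_neg hne, hf0ne v0 (fun hvz => hzP (by rw [hvz] at hv0; exact hv0))] at h2
    exact absurd h2 (by decide)
  have hmem : ∀ C ∈ H, C = X ∨ C = W1 ∨ C = DD ∨ C = EE ∨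
      ∃ v0 ∈ clauseVars P, C = Hf v0 := by
    intro C hC
    simp only [hHdef, Finset.mem_insert, Finset.mem_image] at hC
    rcases hC with h | h | h | h | ⟨v0, hv0, h⟩
    · exact Or.inl h
    · exact Or.inr (Or.inl h)
    · exact Or.inr (Or.inr (Or.inl h))
    · exact Or.inr (Or.inr (Or.inr (Or.inl h)))
    · exact Or.inr (Or.inr (Or.inr (Or.inr ⟨v0, hv0, h.symm⟩)))
  have hXmem : X ∈ H := Finset.mem_insert_self _ _
  refine glue G H ?_ ?_ X hXmem ?_
  · intro C hC
    rcases hmem C hC with rfl | rfl | rfl | rfl | ⟨v0, hv0, rfl⟩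
    · exact blowC_mem_blowup hCC _
    · exact blowC_mem_blowup hCC _
    · exact blowC_mem_blowup hD _
    · exact blowC_mem_blowup hE _
    · exact blowC_mem_blowup hCC _
  · intro C hC C' hC' hv
    rcases hmem C hC with rfl | rfl | rfl | rfl | ⟨v0, hv0, rfl⟩ <;>
      rcases hmem C' hC' with rfl | rfl | rfl | rfl | ⟨v1, hv1, rfl⟩
    · rfl
    · exact absurd hv (vne hz1X (hsnd0 _ _))
    · exact absurd hv (vne hz1X (hzblowD _ _))
    · exact absurd hv.symm (vne hz0EE (hnotz0 _ hf0z))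
    · exact absurd hv.symm (vne (hv1Hf v1 hv1) (hv1X v1 hv1))
    · exact absurd hv.symm (vne hz1X (hsnd0 _ _))
    · rfl
    · exact absurd hv.symm (vne hy1DD (hyblowCC _ _))
    · exact absurd hv.symm (vne hy1EE (hyblowCC _ _))
    · exact absurd hv.symm (vne (hz1Hf v1 hv1) (hsnd0 _ _))
    · exact absurd hv.symm (vne hz1X (hzblowD _ _))
    · exact absurd hv (vne hy1DD (hyblowCC _ _))
    · rfl
    · exact absurd hv.symm (vne hz0EE (hzblowD _ _))
    · exact absurd hv (vne hy1DD (hyblowCC _ _))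
    · exact absurd hv (vne hz0EE (hnotz0 _ hf0z))
    · exact absurd hv (vne hy1EE (hyblowCC _ _))
    · exact absurd hv (vne hz0EE (hzblowD _ _))
    · rfl
    · exact absurd hv (vne hz0EE (hz0Hf v1 hv1))
    · exact absurd hv (vne (hv1Hf v0 hv0) (hv1X v0 hv0))
    · exact absurd hv (vne (hz1Hf v0 hv0) (hsnd0 _ _))
    · exact absurd hv.symm (vne hy1DD (hyblowCC _ _))
    · exact absurd hv.symm (vne hz0EE (hz0Hf v0 hv0))
    · rw [hHfinj v0 hv0 v1 (hv ▸ hv1Hf v0 hv0)]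
  · intro w hwX
    rw [sat_blowC] at hwX
    have hwz1 : w (z, 1) = b := by
      have := hwX (z, b) (Finset.mem_insert_self _ _)
      rwa [hf0z] at this
    have hwP : ∀ l ∈ P, w (l.1, 0) = l.2 := by
      intro l hl
      have := hwX l (hPCC l hl)
      rwa [hf0ne l.1 (fun h => hzP (by rw [← (h : l.1 = z)]; exact var_mem_of_mem hl))] at this
    by_cases h1 : w (z, 0) = b
    · -- W1 is satisfied
      refine ⟨W1, by simp only [hHdef, Finset.mem_insert]; tauto,
        (vars_ne_of_mem_not_mem hz1X (hsnd0 _ _)).symm, ?_⟩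
      rw [sat_blowC]
      intro l hl
      rcases Finset.mem_insert.mp hl with rfl | hlP
      · exact h1
      · exact hwP l hlP
    · have hz0 : w (z, 0) = !b := bool_resolve h1
      by_cases h2 : ∃ l ∈ P, w (l.1, 1) = l.2
      · obtain ⟨l, hlP, hw⟩ := h2
        have hlv : l.1 ∈ clauseVars P := var_mem_of_mem hlP
        refine ⟨Hf l.1, ?_, vars_ne_of_mem_not_mem (hv1Hf l.1 hlv) (hv1X l.1 hlv), ?_⟩
        · simp only [hHdef, Finset.mem_insert, Finset.mem_image]
          exact Or.inr (Or.inr (Or.inr (Or.inr ⟨l.1, hlv, rfl⟩)))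
        · rw [sat_blowC]
          intro l' hl'
          rcases Finset.mem_insert.mp hl' with rfl | hl'P
          · rw [if_neg (fun h => hzP (by have h' : z = l.1 := h; rw [h']; exact hlv)), hf0z]
            exact hwz1
          · by_cases hfst : l'.1 = l.1
            · rw [if_pos hfst]
              have : l' = l := hPinj l' hl'P l hlP hfst
              rw [this]
              exact hw
            · rw [if_neg hfst,
                hf0ne l'.1 (fun h => hzP (by rw [← (h : l'.1 = z)]; exact var_mem_of_mem hl'P))]
              exact hwP l' hl'P
      · push_neg at h2
        have haP : ∀ l ∈ P, w (l.1, 1) = !l.2 := fun l hl => bool_resolve (h2 l hl)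
        by_cases h3 : w (y, 1) = polW D y
        · -- DD is satisfied
          refine ⟨DD, by simp only [hHdef, Finset.mem_insert]; tauto,
            vars_ne_of_mem_not_mem hy1DD (hyblowCC _ _), ?_⟩
          rw [sat_blowC]
          intro l hl
          have hl2 : l.2 = polW D l.1 := polW_eq hDinj hl
          by_cases hly : l.1 = y
          · rw [hly, hfDy, hl2, hly]
            exact h3
          · have hlP : l.1 ∈ clauseVars P := hDsub l.1 (var_mem_of_mem hl) hly
            simp only [hfDdef]
            by_cases hmP : (l.1, polW D l.1) ∈ P
            · rw [if_pos hmP, hl2]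
              exact hwP (l.1, polW D l.1) hmP
            · rw [if_neg hmP]
              have hPl : (l.1, polW P l.1) ∈ P := polW_mem hlP
              have := haP (l.1, polW P l.1) hPl
              rw [this, hl2]
              have : polW D l.1 ≠ polW P l.1 := fun h => hmP (h ▸ hPl)
              rw [bool_resolve this]
        · -- EE is satisfied
          have h3' : w (y, 1) = polW E y := by
            rw [bool_resolve h3, bool_resolve hcase, Bool.not_not]
          refine ⟨EE, by simp only [hHdef, Finset.mem_insert]; tauto,
            vars_ne_of_mem_not_mem hz0EE (hnotz0 _ hf0z), ?_⟩
          rw [sat_blowC]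
          intro l hl
          have hl2 : l.2 = polW E l.1 := polW_eq hEinj hl
          by_cases hlz : l.1 = z
          · have : l = (z, !b) := hEinj l hl (z, !b) hzE hlz
            rw [this] at hl ⊢
            simpa [hfEz] using hz0
          · by_cases hly : l.1 = y
            · rw [hly, hfEy, hl2, hly]
              exact h3'
            · have hlP : l.1 ∈ clauseVars P := hEsub l.1 (var_mem_of_mem hl) hly hlz
              simp only [hfEdef]
              rw [if_neg hlz]
              by_cases hmP : (l.1, polW E l.1) ∈ P
              · rw [if_pos hmP, hl2]
                exact hwP (l.1, polW E l.1) hmP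
              · rw [if_neg hmP]
                have hPl : (l.1, polW P l.1) ∈ P := polW_mem hlP
                rw [haP (l.1, polW P l.1) hPl, hl2]
                have : polW E l.1 ≠ polW P l.1 := fun h => hmP (h ▸ hPl)
                rw [bool_resolve this]

lemma inj_of_KClause {V : Type*} [DecidableEq V] {C : SatClause V} {k : ℕ}
    (h : IsKClause k C) : ∀ l ∈ C, ∀ l' ∈ C, l.1 = l'.1 → l = l' := by
  obtain ⟨h1, h2⟩ := h
  have hinj : Set.InjOn (Prod.fst : V × Bool → V) ↑C := by
    apply Finset.card_image_iff.mp
    unfold clauseVars at h2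
    rw [h2, h1]
  exact fun l hl l' hl' hf => hinj hl hl' hf

lemma pair_structure {V : Type*} [DecidableEq V] {Ca Cb : SatClause V}
    (hCainj : ∀ l ∈ Ca, ∀ l' ∈ Ca, l.1 = l'.1 → l = l')
    (hCbinj : ∀ l ∈ Cb, ∀ l' ∈ Cb, l.1 = l'.1 → l = l')
    (hvars : clauseVars Ca = clauseVars Cb)
    (hcard : ((Ca \ Cb).image Prod.fst).card = 1)
    {z : V} {bz : Bool} (hzl : (z, bz) ∈ Ca) (hznb : (z, bz) ∉ Cb) :
    Ca = insert (z, bz) (Ca.erase (z, bz)) ∧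
    Cb = insert (z, !bz) (Ca.erase (z, bz)) ∧
    z ∉ clauseVars (Ca.erase (z, bz)) ∧
    clauseVars (Ca.erase (z, bz)) = (clauseVars Ca).erase z := by
  classical
  have hzdiff : (z, bz) ∈ Ca \ Cb := Finset.mem_sdiff.mpr ⟨hzl, hznb⟩
  have himg : (Ca \ Cb).image Prod.fst = {z} := by
    obtain ⟨a, ha⟩ := Finset.card_eq_one.mp hcard
    have hz : z ∈ (Ca \ Cb).image Prod.fst := Finset.mem_image_of_mem _ hzdiff
    rw [ha] at hz ⊢
    rw [Finset.mem_singleton.mp hz]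
  have step1 : ∀ l ∈ Ca, l.1 ≠ z → l ∈ Cb := by
    intro l hl hne
    by_contra hnb
    have : l.1 ∈ (Ca \ Cb).image Prod.fst :=
      Finset.mem_image_of_mem _ (Finset.mem_sdiff.mpr ⟨hl, hnb⟩)
    rw [himg] at this
    exact hne (Finset.mem_singleton.mp this)
  have hzCb : z ∈ clauseVars Cb := hvars ▸ var_mem_of_mem hzl
  have hz2 : (z, !bz) ∈ Cb := by
    have hmem := polW_mem hzCb
    have : polW Cb z ≠ bz := fun h => hznb (h ▸ hmem)
    rwa [bool_resolve this] at hmem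
  have step3 : ∀ l ∈ Cb, l.1 ≠ z → l ∈ Ca := by
    intro l hl hne
    have : l.1 ∈ clauseVars Ca := hvars ▸ var_mem_of_mem hl
    obtain ⟨l', hl', hfst⟩ := Finset.mem_image.mp this
    have hl'b : l' ∈ Cb := step1 l' hl' (by rw [hfst]; exact hne)
    have : l = l' := hCbinj l hl l' hl'b hfst.symm
    rw [this]; exact hl'
  have herase : ∀ l ∈ Ca.erase (z, bz), l.1 ≠ z := by
    intro l hl hfz
    have hlCa : l ∈ Ca := Finset.mem_of_mem_erase hl
    have : l = (z, bz) := hCainj l hlCa (z, bz) hzl (by rw [hfz])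
    exact (Finset.ne_of_mem_erase hl) this
  refine ⟨(Finset.insert_erase hzl).symm, ?_, ?_, ?_⟩
  · ext l
    constructor
    · intro hl
      by_cases hfz : l.1 = z
      · have : l = (z, !bz) := hCbinj l hl (z, !bz) hz2 hfz
        rw [this]; exact Finset.mem_insert_self _ _
      · refine Finset.mem_insert_of_mem (Finset.mem_erase.mpr ⟨?_, step3 l hl hfz⟩)
        intro h; exact hfz (by rw [h])
    · intro hl
      rcases Finset.mem_insert.mp hl with rfl | hl
      · exact hz2
      · exact step1 l (Finset.mem_of_mem_erase hl) (herase l hl)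
  · intro h
    obtain ⟨l, hl, rfl⟩ := Finset.mem_image.mp h
    exact herase l hl rfl
  · ext u
    constructor
    · intro h
      obtain ⟨l, hl, rfl⟩ := Finset.mem_image.mp h
      exact Finset.mem_erase.mpr ⟨herase l hl, var_mem_of_mem (Finset.mem_of_mem_erase hl)⟩
    · intro h
      obtain ⟨hne, hu⟩ := Finset.mem_erase.mp h
      obtain ⟨l, hl, rfl⟩ := Finset.mem_image.mp hu
      refine Finset.mem_image_of_mem _ (Finset.mem_erase.mpr ⟨?_, hl⟩)
      intro heq; exact hne (by rw [heq])

end Main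

/-- Fix `k ≥ 2`. If `G` is a semisimple `k`-SAT formula whose type is
isomorphic to `T_k`, then the 2-blowup `G[2]` contains a simple non-minimal subformula. -/
theorem type_Tk_blowup_nonminimal (k : ℕ) (hk : 2 ≤ k) {V : Type*} [DecidableEq V]
    (G : SatFormula V) (hG : IsKFormula k G) (hss : SemisimpleFormula G)
    (hiso : ∃ φ : Fin (k + 1) → V, Function.Injective φ ∧
      formulaType G = PDG.map φ (TkPDG k)) :
    ∃ H ⊆ formulaBlowup 2 G, SimpleFormula H ∧ ¬ MinimalFormula H := by
  classical
  obtain ⟨φ, hφ, htype⟩ := hiso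
  have hk0 : k < k + 1 := Nat.lt_succ_self k
  have hk1 : k - 1 < k + 1 := by omega
  have hk2 : k - 2 < k + 1 := by omega
  set i0 : Fin (k + 1) := ⟨k, hk0⟩ with hi0def
  set i1 : Fin (k + 1) := ⟨k - 1, hk1⟩ with hi1def
  set i2 : Fin (k + 1) := ⟨k - 2, hk2⟩ with hi2def
  have hi10 : i1 ≠ i0 := by simp only [hi0def, hi1def, Fin.mk.injEq, Ne]; omega
  have hi12 : i1 ≠ i2 := by simp only [hi1def, hi2def, Fin.mk.injEq, Ne]; omega
  have hi02 : i0 ≠ i2 := by simp only [hi0def, hi2def, Fin.mk.injEq, Ne]; omega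
  set z : V := φ i0 with hzdef
  set y : V := φ i1 with hydef
  -- extract the directed edge: two clauses Ca ≠ Cb with the same variable set
  have hdirmem : ((Finset.univ.erase i1).image φ, φ i0) ∈ (formulaType G).dir := by
    rw [htype]
    exact Finset.mem_image_of_mem _ (Finset.mem_singleton_self _)
  unfold formulaType at hdirmem
  simp only [Finset.mem_biUnion, Finset.mem_filter, Finset.mem_product,
    Finset.mem_image] at hdirmem
  obtain ⟨⟨Ca, Cb⟩, ⟨⟨hCa, hCb⟩, hne, hvars⟩, v, ⟨l, hlmem, hlv⟩, heq⟩ := hdirmem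
  have hS3 : clauseVars Ca = (Finset.univ.erase i1).image φ :=
    congrArg Prod.fst heq
  have hvz : v = φ i0 := congrArg Prod.snd heq
  -- the differing literal
  have hzlit : (z, l.2) ∈ Ca \ Cb := by
    rw [hzdef, ← hvz, ← hlv]
    exact hlmem
  obtain ⟨hzCa, hznCb⟩ := Finset.mem_sdiff.mp hzlit
  set bz : Bool := l.2 with hbzdef
  -- injectivity of clauses
  have hCainj := inj_of_KClause (hG Ca hCa)
  have hCbinj := inj_of_KClause (hG Cb hCb)
  obtain ⟨hcard, _⟩ := hss Ca hCa Cb hCb hne hvars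
  obtain ⟨hCaeq, hCbeq, hzPn, hvarsP⟩ :=
    pair_structure hCainj hCbinj hvars hcard hzCa hznCb
  set P : SatClause V := Ca.erase (z, bz) with hPdef
  -- extract D and E from the undirected edges
  have hDmem : (Finset.univ.erase i0).image φ ∈ (formulaType G).undir := by
    rw [htype]
    exact Finset.mem_image_of_mem _ (Finset.mem_insert_self _ _)
  have hEmem : (Finset.univ.erase i2).image φ ∈ (formulaType G).undir := by
    rw [htype]
    refine Finset.mem_image_of_mem _ ?_
    exact Finset.mem_insert_of_mem (Finset.mem_singleton_self _)
  unfold formulaType at hDmem hEmem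
  simp only [Finset.mem_image, Finset.mem_filter] at hDmem hEmem
  obtain ⟨D, ⟨hD, -⟩, hDS⟩ := hDmem
  obtain ⟨E, ⟨hE, -⟩, hES⟩ := hEmem
  have hDinj := inj_of_KClause (hG D hD)
  have hEinj := inj_of_KClause (hG E hE)
  -- variable-set facts
  have himg_ne : ∀ (i j : Fin (k + 1)), i ≠ j → φ i ∉ (Finset.univ.erase i).image φ := by
    intro i j hij h
    obtain ⟨j', hj', hφj⟩ := Finset.mem_image.mp h
    exact (Finset.ne_of_mem_erase hj') (hφ hφj)
  have hyP : y ∉ clauseVars P := by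
    rw [hvarsP, hS3]
    intro h
    obtain ⟨-, h⟩ := Finset.mem_erase.mp h
    obtain ⟨j, hj, hφj⟩ := Finset.mem_image.mp h
    exact (Finset.ne_of_mem_erase hj) (hφ hφj)
  have hyz : y ≠ z := fun h => hi10 (hφ h)
  have hyD : y ∈ clauseVars D := by
    rw [hDS]
    exact Finset.mem_image_of_mem _ (Finset.mem_erase.mpr ⟨hi10, Finset.mem_univ _⟩)
  have hyE : y ∈ clauseVars E := by
    rw [hES]
    exact Finset.mem_image_of_mem _ (Finset.mem_erase.mpr ⟨hi12, Finset.mem_univ _⟩)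
  have hzE : z ∈ clauseVars E := by
    rw [hES]
    exact Finset.mem_image_of_mem _ (Finset.mem_erase.mpr ⟨hi02, Finset.mem_univ _⟩)
  have hzD : z ∉ clauseVars D := by
    rw [hDS]
    intro h
    obtain ⟨j, hj, hφj⟩ := Finset.mem_image.mp h
    exact (Finset.ne_of_mem_erase hj) (hφ hφj)
  have hDsub : ∀ u ∈ clauseVars D, u ≠ y → u ∈ clauseVars P := by
    intro u hu huy
    rw [hDS] at hu
    obtain ⟨j, hj, rfl⟩ := Finset.mem_image.mp hu
    have hji0 : j ≠ i0 := Finset.ne_of_mem_erase hj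
    have hji1 : j ≠ i1 := fun h => huy (by rw [hydef, h])
    rw [hvarsP, hS3]
    refine Finset.mem_erase.mpr ⟨fun h => hji0 (hφ h), ?_⟩
    exact Finset.mem_image_of_mem _ (Finset.mem_erase.mpr ⟨hji1, Finset.mem_univ _⟩)
  have hEsub : ∀ u ∈ clauseVars E, u ≠ y → u ≠ z → u ∈ clauseVars P := by
    intro u hu huy huz
    rw [hES] at hu
    obtain ⟨j, hj, rfl⟩ := Finset.mem_image.mp hu
    have hji1 : j ≠ i1 := fun h => huy (by rw [hydef, h])
    rw [hvarsP, hS3]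
    refine Finset.mem_erase.mpr ⟨huz, ?_⟩
    exact Finset.mem_image_of_mem _ (Finset.mem_erase.mpr ⟨hji1, Finset.mem_univ _⟩)
  have hPD : clauseVars P ⊆ clauseVars D := by
    intro u hu
    rw [hvarsP, hS3] at hu
    obtain ⟨huz, hu⟩ := Finset.mem_erase.mp hu
    obtain ⟨j, hj, rfl⟩ := Finset.mem_image.mp hu
    have hji0 : j ≠ i0 := fun h => huz (by rw [hzdef, h])
    rw [hDS]
    exact Finset.mem_image_of_mem _ (Finset.mem_erase.mpr ⟨hji0, Finset.mem_univ _⟩)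
  have hPinj : ∀ l ∈ P, ∀ l' ∈ P, l.1 = l'.1 → l = l' := by
    intro l hl l' hl' hf
    exact hCainj l (Finset.mem_of_mem_erase hl) l' (Finset.mem_of_mem_erase hl') hf
  -- the polarity of E at z, and the C-clause with opposite z-polarity
  set b : Bool := !(polW E z) with hbdef
  have hzElit : (z, !b) ∈ E := by
    rw [hbdef, Bool.not_not]
    exact polW_mem hzE
  have hCCmem : insert (z, b) P ∈ G := by
    by_cases hb : b = bz
    · rw [hb, ← hCaeq]; exact hCa
    · rw [bool_resolve hb, ← hCbeq]; exact hCb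
  by_cases hpol : polW D y = polW E y
  · exact case_two G P D E z y b hCCmem hD hE hPinj hDinj hEinj hzPn hyP hyz hyD hyE
      hzElit hzD hEsub hPD hpol
  · exact case_one G P D E z y b hCCmem hD hE hPinj hDinj hEinj hzPn hyP hyz hyD hyE
      hzElit hzD hDsub hEsub hpol
end

section
/- Fix an integer k ≥ 2. Let S be a simplex k-SAT formula (a simple k-SAT formula on k+1 variables with exactly k+1 clauses) that is not unate. Then the 2-blowup S[2] is not minimal. -/
lemma blowup_mem {V : Type*} [DecidableEq V] {S : SatFormula V} {C : SatClause V}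
    (hC : C ∈ S) (g : ∀ a ∈ C, Fin 2) :
    C.attach.image (fun l => ((l.1.1, g l.1 l.2), l.1.2)) ∈ formulaBlowup 2 S := by
  refine Finset.mem_biUnion.2 ⟨C, hC, ?_⟩
  exact Finset.mem_image.2 ⟨g, Finset.mem_pi.2 fun a h => Finset.mem_univ _, rfl⟩

lemma blowup_sat {V : Type*} [DecidableEq V] {C : SatClause V} (w : V × Fin 2 → Bool)
    (g : ∀ a ∈ C, Fin 2) (h : ∀ l (hl : l ∈ C), w (l.1, g l hl) = l.2) :
    SatisfiesClause w (C.attach.image (fun l => ((l.1.1, g l.1 l.2), l.1.2))) := by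
  intro l hl
  simp only [Finset.mem_image, Finset.mem_attach] at hl
  obtain ⟨a, -, rfl⟩ := hl
  exact h a.1 a.2

/-- Fix `k ≥ 2`. The 2-blowup of a non-unate simplex (a simple `k`-SAT
formula on `k+1` variables with exactly `k+1` clauses that is not unate) is not minimal. -/
theorem nonunate_simplex_blowup_nonminimal (k : ℕ) (hk : 2 ≤ k) {V : Type*} [DecidableEq V]
    (S : SatFormula V) (hS : IsKFormula k S) (hsimple : SimpleFormula S)
    (hvars : (formulaVars S).card = k + 1) (hclauses : S.card = k + 1)
    (hnu : ¬ UnateFormula S) :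
    ¬ MinimalFormula (formulaBlowup 2 S) := by
  intro hmin
  rw [UnateFormula] at hnu; push_neg at hnu
  obtain ⟨x, ⟨Ca, hCa, hxa⟩, Cb, hCb, hxb⟩ := hnu
  have hxv : x ∈ formulaVars S :=
    Finset.mem_biUnion.2 ⟨Ca, hCa, Finset.mem_image.2 ⟨_, hxa, rfl⟩⟩
  -- the variable-set map is a bijection onto k-subsets
  have himg : S.image clauseVars = (formulaVars S).powersetCard k := by
    apply Finset.eq_of_subset_of_card_le
    · intro t ht
      obtain ⟨C, hC, rfl⟩ := Finset.mem_image.1 ht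
      exact Finset.mem_powersetCard.2
        ⟨Finset.subset_biUnion_of_mem clauseVars hC, (hS C hC).2⟩
    · rw [Finset.card_powersetCard, hvars,
        Finset.card_image_of_injOn (fun C hC C' hC' h => hsimple C hC C' hC' h), hclauses,
        Nat.choose_succ_self_right]
  -- find the clause omitting x
  obtain ⟨C, hC, hCV⟩ : ∃ C ∈ S, clauseVars C = (formulaVars S).erase x := by
    have : (formulaVars S).erase x ∈ S.image clauseVars := by
      rw [himg]
      exact Finset.mem_powersetCard.2 ⟨Finset.erase_subset _ _,
        by simp [Finset.card_erase_of_mem hxv, hvars]⟩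
    simpa using Finset.mem_image.1 this
  have hxC : x ∉ clauseVars C := by rw [hCV]; exact Finset.notMem_erase _ _
  obtain ⟨w, hw, huniq⟩ := hmin _ (blowup_mem hC (fun a _ => (0 : Fin 2)))
  have hw0 : ∀ l ∈ C, w (l.1, 0) = l.2 := fun l hl =>
    hw _ (Finset.mem_image.2 ⟨⟨l, hl⟩, Finset.mem_attach _ _, rfl⟩)
  have hD0mem : ∀ p ∈ C.attach.image
      (fun l => ((l.1.1, (fun (a : V × Bool) (_ : a ∈ C) => (0 : Fin 2)) l.1 l.2), l.1.2)),
      p.1.2 = 0 ∧ p.1.1 ∈ clauseVars C := by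
    intro p hp
    obtain ⟨a, -, rfl⟩ := Finset.mem_image.1 hp
    exact ⟨rfl, Finset.mem_image.2 ⟨a.1, a.2, rfl⟩⟩
  by_cases hcase : ∃ l ∈ C, w (l.1, 1) = l.2
  · obtain ⟨l0, hl0, hwl0⟩ := hcase
    have hsat : ∀ l (hl : l ∈ C),
        w (l.1, (fun (a : V × Bool) (_ : a ∈ C) => if a = l0 then (1 : Fin 2) else 0) l hl)
          = l.2 := by
      intro l hl
      by_cases h : l = l0
      · subst h; simpa using hwl0
      · simpa [h] using hw0 l hl
    have heq := huniq _ (blowup_mem hC _) (blowup_sat w _ hsat)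
    have hmem : ((l0.1, (1 : Fin 2)), l0.2) ∈ C.attach.image
        (fun l => ((l.1.1, (fun (a : V × Bool) (_ : a ∈ C) =>
          if a = l0 then (1 : Fin 2) else 0) l.1 l.2), l.1.2)) := by
      refine Finset.mem_image.2 ⟨⟨l0, hl0⟩, Finset.mem_attach _ _, ?_⟩
      simp
    rw [heq] at hmem
    simpa using (hD0mem _ hmem).1
  · push_neg at hcase
    have hw1 : ∀ l ∈ C, w (l.1, 1) = !l.2 := by
      intro l hl
      have h := hcase l hl
      cases hL : l.2 <;> cases hW : w (l.1, 1) <;> simp_all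
    obtain ⟨E, hE, hxE⟩ : ∃ E ∈ S, (x, w (x, 0)) ∈ E := by
      cases hb : w (x, 0)
      · exact ⟨Cb, hCb, hxb⟩
      · exact ⟨Ca, hCa, hxa⟩
    have hEK := hS E hE
    have hEinj : Set.InjOn Prod.fst (E : Set (V × Bool)) := by
      have : (E.image Prod.fst).card = E.card := by
        have h2 := hEK.2
        rw [clauseVars] at h2
        rw [h2, hEK.1]
      exact Finset.card_image_iff.1 this
    have hsatE : ∀ l (hl : l ∈ E),
        w (l.1, (fun (a : V × Bool) (_ : a ∈ E) =>
          if w (a.1, 0) = a.2 then (0 : Fin 2) else 1) l hl) = l.2 := by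
      intro l hl
      by_cases h0 : w (l.1, 0) = l.2
      · simp [h0]
      · simp only [h0, if_false]
        have hlx : l.1 ≠ x := by
          intro hxx
          apply h0
          have hleq : l = (x, w (x, 0)) :=
            hEinj (Finset.mem_coe.2 hl) (Finset.mem_coe.2 hxE) hxx
          rw [hleq]
        have hlC : l.1 ∈ clauseVars C := by
          rw [hCV]
          exact Finset.mem_erase.2 ⟨hlx,
            Finset.mem_biUnion.2 ⟨E, hE, Finset.mem_image.2 ⟨l, hl, rfl⟩⟩⟩
        obtain ⟨l', hl', hfst⟩ := Finset.mem_image.1 hlC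
        have h1 := hw0 l' hl'
        have h2 := hw1 l' hl'
        rw [hfst] at h1 h2
        rw [h2]
        rw [h1] at h0
        cases hL : l.2 <;> cases hL' : l'.2 <;> simp_all
    have heq := huniq _ (blowup_mem hE _) (blowup_sat w _ hsatE)
    have hmem : ((x, if w (x, 0) = w (x, 0) then (0 : Fin 2) else 1), w (x, 0)) ∈
        E.attach.image (fun l => ((l.1.1, (fun (a : V × Bool) (_ : a ∈ E) =>
          if w (a.1, 0) = a.2 then (0 : Fin 2) else 1) l.1 l.2), l.1.2)) :=
      Finset.mem_image.2 ⟨⟨(x, w (x, 0)), hxE⟩, Finset.mem_attach _ _, rfl⟩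
    rw [heq] at hmem
    exact hxC (hD0mem _ hmem).2
end

section
/- Fix an integer k ≥ 2. For every ρ > 0 there exist ε > 0, c > 0, and n₀ such that for all n ≥ n₀: every simple k-SAT formula G on n variables that has at least (1−ε)·C(n,k) clauses and is ρ-far from unate contains at least c·n^{k+1} non-unate simplex subformulae. -/
/-!
Let `D` collect, for every variable `x`, the clauses containing the minority literal of `x`;
deleting `D` leaves a unate formula, so farness forces `|D| > ρ nᵏ`.

Fix `x`, a clause `C` with the minority literal and a clause `C'` with the majority literal of
`x`. Exchanging the variables of `C` for those of `C'` one at a time, through `k`-sets containing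
`x`, crosses an edge `(T, T')` of `k`-sets sharing `k - 1` variables such that `T` carries the
minority literal and `T'` does not; `(C, C')` is determined by this edge up to `O(n^(k-2))`
choices. Either `T'` carries no clause, or `T` and `T'` carry clauses with opposite literals at
`x`, and their `k + 1` variables span a non-unate simplex unless they contain a missing `k`-set.
With `a_x ≤ b_x` the numbers of clauses with the minority and the majority literal of `x`, this
bounds `a_x² ≤ a_x b_x` by `O(n^(k-2))` times the number of such edges; summing over `x` with
Cauchy–Schwarz gives `|D|² = O(nᵏ · #missing k-sets + n^(k-1) · #non-unate simplices)`,
which is below `ρ² n^(2k)` when both counts are at most `ε nᵏ` and `ε n^(k+1)`.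
-/

open Finset

theorem exists_exchange_edge {α : Type*} [DecidableEq α] (p : Finset α → Prop)
    {S S' : Finset α} (hcard : #S = #S') (hS : p S) (hS' : ¬ p S') :
    ∃ T T', #T = #S ∧ #T' = #S ∧ #(T \ T') = 1 ∧ #(T' \ T) = 1 ∧ S ∩ S' ⊆ T' ∧
      p T ∧ ¬ p T' ∧ #(S \ T) + #(S' \ T') < #(S \ S') := by
  induction hm : #(S \ S') generalizing S with
  | zero =>
    have : S = S' := eq_of_subset_of_card_le (sdiff_eq_empty_iff_subset.1 (card_eq_zero.1 hm))
      hcard.ge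
    exact absurd (this ▸ hS) hS'
  | succ m ih =>
    obtain ⟨u, hu⟩ : (S \ S').Nonempty := by rw [← card_pos, hm]; omega
    obtain ⟨v, hv⟩ : (S' \ S).Nonempty := by
      rw [← card_pos, ← card_sdiff_comm hcard, hm]; omega
    rw [mem_sdiff] at hu hv
    set S₁ := insert v (S.erase u)
    have hS₁ : #S₁ = #S := by
      rw [card_insert_of_notMem (by simp [hv.2]), card_erase_of_mem hu.1]
      have := card_pos.2 ⟨u, hu.1⟩
      omega
    have hinter : S ∩ S' ⊆ S₁ := fun a ha => by
      rw [mem_inter] at ha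
      exact mem_insert_of_mem (mem_erase.2 ⟨fun h => hu.2 (h ▸ ha.2), ha.1⟩)
    by_cases hp : p S₁
    · have hS₁S' : S₁ \ S' = (S \ S').erase u := by
        clear ih; ext a; simp only [S₁, mem_sdiff, mem_insert, mem_erase]; grind
      obtain ⟨T, T', hT, hT', h1, h2, hsub, hpT, hpT', hlt⟩ :=
        ih (hS₁.trans hcard) hp (by rw [hS₁S', card_erase_of_mem (by simpa), hm]; rfl)
      refine ⟨T, T', hT.trans hS₁, hT'.trans hS₁, h1, h2,
        fun a ha => hsub (mem_inter.2 ⟨hinter ha, (mem_inter.1 ha).2⟩), hpT, hpT', ?_⟩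
      have : S \ T ⊆ insert u (S₁ \ T) := fun a ha => by
        clear ih; simp only [S₁, mem_sdiff, mem_insert, mem_erase] at ha ⊢; grind
      have := (card_le_card this).trans (card_insert_le _ _)
      omega
    · have hS₁S : S \ S₁ = {u} := by
        clear ih; ext a; simp only [S₁, mem_sdiff, mem_insert, mem_erase, mem_singleton]; grind
      have hSS₁ : S₁ \ S = {v} := by
        clear ih; ext a; simp only [S₁, mem_sdiff, mem_insert, mem_erase, mem_singleton]; grind
      have hS'S₁ : S' \ S₁ = (S' \ S).erase v := by
        clear ih; ext a; simp only [S₁, mem_sdiff, mem_insert, mem_erase]; grind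
      refine ⟨S, S₁, rfl, hS₁, by rw [hS₁S, card_singleton], by rw [hSS₁, card_singleton],
        hinter, hS, hp, ?_⟩
      rw [sdiff_self, bot_eq_empty, card_empty, hS'S₁, card_erase_of_mem (by simpa),
        ← card_sdiff_comm hcard, hm]
      omega

theorem sum_card_bipartiteAbove_le {ι β : Type*} {s : Finset ι} {t : Finset β}
    (r : ι → β → Prop) [∀ i b, Decidable (r i b)] {m : ℕ}
    (h : ∀ b ∈ t, #(s.bipartiteBelow r b) ≤ m) :
    ∑ i ∈ s, #(t.bipartiteAbove r i) ≤ #t * m := by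
  rw [sum_card_bipartiteAbove_eq_sum_card_bipartiteBelow]
  exact sum_le_card_nsmul _ _ _ h

section Clauses

variable {V : Type*} [DecidableEq V] {k : ℕ} {G : SatFormula V}

theorem mem_clauseVars {C : SatClause V} {x : V} : x ∈ clauseVars C ↔ ∃ b, (x, b) ∈ C := by
  simp [clauseVars]

theorem IsKClause.eq_of_mem_of_mem {C : SatClause V} (hC : IsKClause k C) {x : V} {b b' : Bool}
    (h : (x, b) ∈ C) (h' : (x, b') ∈ C) : b = b' := by
  have hinj : Set.InjOn Prod.fst (C : Set (V × Bool)) := by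
    rw [← card_image_iff]
    exact hC.2.trans hC.1.symm
  exact congrArg Prod.snd (hinj h h' rfl)

theorem SimpleFormula.mono {S : SatFormula V} (hG : SimpleFormula G) (h : S ⊆ G) :
    SimpleFormula S :=
  fun C hC C' hC' => hG C (h hC) C' (h hC')

def subformulaOn (G : SatFormula V) (W : Finset V) : SatFormula V :=
  G.filter (clauseVars · ⊆ W)

theorem card_subformulaOn_le (hG : IsKFormula k G) (hs : SimpleFormula G) (W : Finset V) :
    #(subformulaOn G W) ≤ (#W).choose k := by
  rw [← card_powersetCard]
  refine card_le_card_of_injOn clauseVars (fun C hC => ?_)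
    (fun C hC C' hC' => hs C (mem_filter.1 hC).1 C' (mem_filter.1 hC').1)
  rw [subformulaOn, mem_coe, mem_filter] at hC
  exact mem_powersetCard.2 ⟨hC.2, (hG C hC.1).2⟩

def clausesWith (G : SatFormula V) (l : V × Bool) : SatFormula V := G.filter (l ∈ ·)

def minorityPolarity (G : SatFormula V) (x : V) : Bool :=
  decide (#(clausesWith G (x, true)) ≤ #(clausesWith G (x, false)))

theorem card_clausesWith_minorityPolarity_le (x : V) :
    #(clausesWith G (x, minorityPolarity G x)) ≤ #(clausesWith G (x, !minorityPolarity G x)) := by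
  unfold minorityPolarity
  by_cases h : #(clausesWith G (x, true)) ≤ #(clausesWith G (x, false)) <;> simp [h]
  omega

def conflictPairs (k : ℕ) (G : SatFormula V) (x : V) (b : Bool) :
    Finset (SatClause V × SatClause V) :=
  (clausesWith G (x, b) ×ˢ clausesWith G (x, !b)).filter fun p =>
    #(clauseVars p.1 ∪ clauseVars p.2) = k + 1

open Classical in
noncomputable def nonUnateSimplices (k : ℕ) (G : SatFormula V) : Finset (SatFormula V) :=
  G.powerset.filter fun S => SimpleFormula S ∧ #S = k + 1 ∧ #(formulaVars S) = k + 1 ∧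
    ¬ UnateFormula S

theorem mem_nonUnateSimplices {S : SatFormula V} :
    S ∈ nonUnateSimplices k G ↔ S ⊆ G ∧ SimpleFormula S ∧ #S = k + 1 ∧
      #(formulaVars S) = k + 1 ∧ ¬ UnateFormula S := by
  classical
  simp only [nonUnateSimplices, mem_filter, mem_powerset]

theorem subformulaOn_mem_nonUnateSimplices (hG : IsKFormula k G) (hs : SimpleFormula G)
    {T : Finset V} (hT : #T = k + 1) (hfull : powersetCard k T ⊆ G.image clauseVars)
    {C C' : SatClause V} (hC : C ∈ subformulaOn G T) (hC' : C' ∈ subformulaOn G T) {x : V}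
    {b : Bool} (hxC : (x, b) ∈ C) (hxC' : (x, !b) ∈ C') :
    subformulaOn G T ∈ nonUnateSimplices k G := by
  have hsubG : subformulaOn G T ⊆ G := filter_subset _ _
  have himage : (subformulaOn G T).image clauseVars = powersetCard k T := by
    refine Subset.antisymm (fun U hU => ?_) fun U hU => ?_
    · obtain ⟨D, hD, rfl⟩ := mem_image.1 hU
      exact mem_powersetCard.2 ⟨(mem_filter.1 hD).2, (hG D (hsubG hD)).2⟩
    · obtain ⟨D, hD, rfl⟩ := mem_image.1 (hfull hU)
      exact mem_image_of_mem _ (mem_filter.2 ⟨hD, (mem_powersetCard.1 hU).1⟩)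
  have hvars : formulaVars (subformulaOn G T) = T := by
    refine Subset.antisymm (biUnion_subset.2 fun D hD => (mem_filter.1 hD).2) fun t ht => ?_
    have hk : 1 ≤ k := (hG C (hsubG hC)).2 ▸ card_pos.2 ⟨x, mem_clauseVars.2 ⟨b, hxC⟩⟩
    obtain ⟨u, hu, hut⟩ := exists_mem_ne (by omega : 1 < #T) t
    have : T.erase u ∈ (subformulaOn G T).image clauseVars := by
      rw [himage, mem_powersetCard, card_erase_of_mem hu, hT]
      exact ⟨erase_subset _ _, rfl⟩
    obtain ⟨D, hD, hDvars⟩ := mem_image.1 this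
    exact mem_biUnion.2 ⟨D, hD, hDvars ▸ mem_erase.2 ⟨hut.symm, ht⟩⟩
  rw [mem_nonUnateSimplices]
  refine ⟨hsubG, hs.mono hsubG, ?_, by rw [hvars, hT], fun hU => hU x ?_⟩
  · rw [← card_image_of_injOn fun D hD D' hD' => hs.mono hsubG D hD D' hD', himage,
      card_powersetCard, hT, Nat.choose_succ_self_right]
  · cases b
    · exact ⟨⟨C', hC', hxC'⟩, ⟨C, hC, hxC⟩⟩
    · exact ⟨⟨C, hC, hxC⟩, ⟨C', hC', hxC'⟩⟩

end Clauses

section FiniteVariables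

variable {V : Type*} [Fintype V] [DecidableEq V] {k : ℕ} {G : SatFormula V}

def minorityClauses (G : SatFormula V) : SatFormula V :=
  univ.biUnion fun x => clausesWith G (x, minorityPolarity G x)

theorem unateFormula_sdiff_minorityClauses : UnateFormula (G \ minorityClauses G) := by
  rintro x ⟨⟨C, hC, hxC⟩, ⟨C', hC', hxC'⟩⟩
  simp only [minorityClauses, clausesWith, mem_sdiff, mem_biUnion, mem_univ, mem_filter,
    true_and, not_exists, not_and] at hC hC'
  cases h : minorityPolarity G x
  · exact hC'.2 x hC'.1 (h ▸ hxC')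
  · exact hC.2 x hC.1 (h ▸ hxC)

def missingSets (k : ℕ) (G : SatFormula V) : Finset (Finset V) :=
  powersetCard k univ \ G.image clauseVars

theorem card_missingSets_add_card (hG : IsKFormula k G) (hs : SimpleFormula G) :
    #(missingSets k G) + #G = (Fintype.card V).choose k := by
  have hsub : G.image clauseVars ⊆ powersetCard k univ := fun U hU => by
    obtain ⟨C, hC, rfl⟩ := mem_image.1 hU
    exact mem_powersetCard.2 ⟨subset_univ _, (hG C hC).2⟩
  rw [missingSets, ← card_image_of_injOn (fun C hC C' hC' => hs C hC C' hC'),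
    card_sdiff_add_card_eq_card hsub, card_powersetCard, card_univ]

theorem sum_card_filter_mem_missingSets :
    ∑ x, #((missingSets k G).filter (x ∈ ·)) ≤ #(missingSets k G) * k :=
  sum_card_bipartiteAbove_le (· ∈ ·) fun U hU => by
    simp [bipartiteBelow, (mem_powersetCard.1 (mem_sdiff.1 hU).1).2]

variable (V) in
def smallPairs (m : ℕ) : Finset (Finset V × Finset V) :=
  univ.filter fun p => #p.1 + #p.2 ≤ m

theorem card_smallPairs_le [Nonempty V] (m : ℕ) :
    #(smallPairs V m) ≤ (m + 1) ^ 2 * Fintype.card V ^ m := by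
  set I := (range (m + 1) ×ˢ range (m + 1)).filter fun ij => ij.1 + ij.2 ≤ m
  have hsub : smallPairs V m ⊆
      I.biUnion fun ij => powersetCard ij.1 univ ×ˢ powersetCard ij.2 univ := by
    intro p hp
    have hp := (mem_filter.1 hp).2
    exact mem_biUnion.2 ⟨(#p.1, #p.2), mem_filter.2 ⟨by simp; omega, hp⟩, by simp⟩
  have hI : #I ≤ (m + 1) ^ 2 := (card_filter_le _ _).trans (by simp [sq])
  refine (card_le_card hsub).trans ((card_biUnion_le_card_mul _ _ _ fun ij hij => ?_).trans
    (Nat.mul_le_mul_right _ hI))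
  rw [card_product, card_powersetCard, card_powersetCard, card_univ]
  calc _ ≤ Fintype.card V ^ ij.1 * Fintype.card V ^ ij.2 :=
        Nat.mul_le_mul (Nat.choose_le_pow _ _) (Nat.choose_le_pow _ _)
    _ = Fintype.card V ^ (ij.1 + ij.2) := (pow_add _ _ _).symm
    _ ≤ Fintype.card V ^ m := Nat.pow_le_pow_right Fintype.card_pos (mem_filter.1 hij).2

/-- Edges `(T, T')` of the exchange graph on `k`-sets through `x` across which the literal
`(x, b)` loses its support. -/
def boundaryEdges (k : ℕ) (G : SatFormula V) (x : V) (b : Bool) :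
    Finset (Finset V × Finset V) :=
  (powersetCard k univ ×ˢ powersetCard k univ).filter fun e =>
    x ∈ e.2 ∧ #(e.1 \ e.2) = 1 ∧ #(e.2 \ e.1) = 1 ∧
      e.1 ∈ (clausesWith G (x, b)).image clauseVars ∧
      e.2 ∉ (clausesWith G (x, b)).image clauseVars

theorem exists_mem_boundaryEdges (hG : IsKFormula k G) (hs : SimpleFormula G) {x : V} {b : Bool}
    {C C' : SatClause V} (hC : C ∈ clausesWith G (x, b)) (hC' : C' ∈ clausesWith G (x, !b)) :
    ∃ e ∈ boundaryEdges k G x b, #(clauseVars C \ e.1) + #(clauseVars C' \ e.2) ≤ k - 2 := by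
  have hnot : clauseVars C' ∉ (clausesWith G (x, b)).image clauseVars := by
    intro h
    obtain ⟨D, hD, hDC'⟩ := mem_image.1 h
    rw [clausesWith, mem_filter] at hD hC'
    obtain rfl := hs D hD.1 C' hC'.1 hDC'
    simpa using (hG D hD.1).eq_of_mem_of_mem hD.2 hC'.2
  have hCimage := mem_image_of_mem clauseVars hC
  rw [clausesWith, mem_filter] at hC hC'
  have hxC := mem_clauseVars.2 ⟨_, hC.2⟩
  have hxC' := mem_clauseVars.2 ⟨_, hC'.2⟩
  have hkC := (hG C hC.1).2
  have hkC' := (hG C' hC'.1).2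
  obtain ⟨T, T', hT, hT', h1, h2, hsub, hpT, hpT', hlt⟩ :=
    exists_exchange_edge (· ∈ (clausesWith G (x, b)).image clauseVars) (hkC.trans hkC'.symm)
      hCimage hnot
  refine ⟨(T, T'), mem_filter.2 ⟨mem_product.2
    ⟨mem_powersetCard.2 ⟨subset_univ _, hT.trans hkC⟩,
      mem_powersetCard.2 ⟨subset_univ _, hT'.trans hkC⟩⟩,
    hsub (mem_inter.2 ⟨hxC, hxC'⟩), h1, h2, hpT, hpT'⟩, ?_⟩
  have : #(clauseVars C \ clauseVars C') ≤ k - 1 := by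
    rw [← hkC, ← card_erase_of_mem hxC]
    exact card_le_card fun a ha => mem_erase.2
      ⟨by rintro rfl; exact (mem_sdiff.1 ha).2 hxC', (mem_sdiff.1 ha).1⟩
  dsimp only
  omega

theorem card_mul_card_clausesWith_le (hG : IsKFormula k G) (hs : SimpleFormula G) (x : V)
    (b : Bool) : #(clausesWith G (x, b)) * #(clausesWith G (x, !b)) ≤
      #(boundaryEdges k G x b) * (4 ^ k * #(smallPairs V (k - 2))) := by
  set A := clausesWith G (x, b)
  set B := clausesWith G (x, !b)
  have hinj : Set.InjOn (fun p : SatClause V × SatClause V => (clauseVars p.1, clauseVars p.2))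
      (A ×ˢ B : Finset _) := by
    rintro ⟨C, C'⟩ hp ⟨D, D'⟩ hq h
    simp only [coe_product, Set.mem_prod, mem_coe, A, B, clausesWith, mem_filter] at hp hq
    simp only [Prod.mk.injEq] at h ⊢
    exact ⟨hs _ hp.1.1 _ hq.1.1 h.1, hs _ hp.2.1 _ hq.2.1 h.2⟩
  -- the variable sets of `C` and `C'` are recovered from an edge `e` crossed on the way between
  -- them, their intersections with `e`, and the at most `k - 2` variables outside `e`
  have hsub : (A ×ˢ B).image (fun p => (clauseVars p.1, clauseVars p.2)) ⊆
      (boundaryEdges k G x b).biUnion fun e =>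
        ((e.1.powerset ×ˢ e.2.powerset) ×ˢ smallPairs V (k - 2)).image
          fun q => (q.1.1 ∪ q.2.1, q.1.2 ∪ q.2.2) := by
    intro _ h
    obtain ⟨⟨C, C'⟩, hCC', rfl⟩ := mem_image.1 h
    obtain ⟨hC, hC'⟩ := mem_product.1 hCC'
    obtain ⟨e, he, hsmall⟩ := exists_mem_boundaryEdges hG hs hC hC'
    refine mem_biUnion.2 ⟨e, he, mem_image.2 ⟨((clauseVars C ∩ e.1, clauseVars C' ∩ e.2),
      (clauseVars C \ e.1, clauseVars C' \ e.2)), ?_,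
      Prod.ext (sup_inf_sdiff _ _) (sup_inf_sdiff _ _)⟩⟩
    simp only [mem_product, mem_powerset, inter_subset_right, true_and, smallPairs, mem_filter,
      mem_univ]
    exact hsmall
  rw [← card_product, ← card_image_of_injOn hinj]
  refine (card_le_card hsub).trans (card_biUnion_le_card_mul _ _ _ fun e he => ?_)
  obtain ⟨hT, hT'⟩ := mem_product.1 (mem_filter.1 he).1
  refine card_image_le.trans ?_
  rw [card_product, card_product, card_powerset, card_powerset, (mem_powersetCard.1 hT).2,
    (mem_powersetCard.1 hT').2, ← mul_pow]
  rfl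

theorem card_boundaryEdges_le (x : V) (b : Bool) :
    #(boundaryEdges k G x b) ≤
      #((missingSets k G).filter (x ∈ ·)) * (Fintype.card V * k) + #(conflictPairs k G x b) := by
  have hsub : boundaryEdges k G x b ⊆
      ((missingSets k G).filter (x ∈ ·)).biUnion (fun U =>
        (univ ×ˢ U).image fun uv => (insert uv.1 (U.erase uv.2), U)) ∪
      (conflictPairs k G x b).image fun p => (clauseVars p.1, clauseVars p.2) := by
    rintro ⟨T, T'⟩ he
    simp only [boundaryEdges, mem_filter, mem_product, mem_powersetCard] at he
    obtain ⟨⟨-, -, hT'⟩, hx, h1, h2, hT, hnT'⟩ := he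
    by_cases hmiss : T' ∈ G.image clauseVars
    · obtain ⟨C', hC', rfl⟩ := mem_image.1 hmiss
      obtain ⟨C, hC, rfl⟩ := mem_image.1 hT
      obtain ⟨b', hb'⟩ := mem_clauseVars.1 hx
      have hb : b' = !b := by
        rcases Bool.eq_or_eq_not b' b with rfl | h
        · exact absurd (mem_image_of_mem _ (mem_filter.2 ⟨hC', hb'⟩)) hnT'
        · exact h
      refine mem_union_right _ (mem_image.2 ⟨(C, C'), mem_filter.2
        ⟨mem_product.2 ⟨hC, mem_filter.2 ⟨hC', hb ▸ hb'⟩⟩, ?_⟩, rfl⟩)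
      rw [← card_sdiff_add_card, h1, hT', add_comm]
    · obtain ⟨u, hu⟩ := card_eq_one.1 h1
      obtain ⟨v, hv⟩ := card_eq_one.1 h2
      have hvT' : v ∈ T' := (mem_sdiff.1 (hv ▸ mem_singleton_self v)).1
      have hT : insert u (T'.erase v) = T := by
        ext a
        have hua := congrArg (a ∈ ·) hu
        have hva := congrArg (a ∈ ·) hv
        simp only [mem_sdiff, mem_singleton, eq_iff_iff] at hua hva
        simp only [mem_insert, mem_erase]
        grind
      refine mem_union_left _ (mem_biUnion.2 ⟨T', mem_filter.2
        ⟨mem_sdiff.2 ⟨mem_powersetCard.2 ⟨subset_univ _, hT'⟩, hmiss⟩, hx⟩,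
        mem_image.2 ⟨(u, v), mem_product.2 ⟨mem_univ _, hvT'⟩, by rw [hT]⟩⟩)
  refine (card_le_card hsub).trans ((card_union_le _ _).trans (add_le_add ?_ card_image_le))
  refine card_biUnion_le_card_mul _ _ _ fun U hU => card_image_le.trans ?_
  rw [card_product, card_univ, (mem_powersetCard.1 (mem_sdiff.1 (mem_filter.1 hU).1).1).2]

def conflicts (k : ℕ) (G : SatFormula V) : Finset (SatClause V × SatClause V) :=
  (G ×ˢ G).filter fun p =>
    #(clauseVars p.1 ∪ clauseVars p.2) = k + 1 ∧ ∃ x b, (x, b) ∈ p.1 ∧ (x, !b) ∈ p.2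

theorem sum_card_conflictPairs_le (hG : IsKFormula k G) (f : V → Bool) :
    ∑ x, #(conflictPairs k G x (f x)) ≤ #(conflicts k G) * k := by
  have hsub (x : V) : conflictPairs k G x (f x) ⊆ conflicts k G := fun p hp => by
    simp only [conflictPairs, clausesWith, mem_filter, mem_product] at hp
    exact mem_filter.2
      ⟨mem_product.2 ⟨hp.1.1.1, hp.1.2.1⟩, hp.2, x, f x, hp.1.1.2, hp.1.2.2⟩
  calc ∑ x, #(conflictPairs k G x (f x))
      = ∑ x, #((conflicts k G).bipartiteAbove
          (fun x p => p ∈ conflictPairs k G x (f x)) x) := by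
        simp only [bipartiteAbove, filter_mem_eq_inter, inter_eq_right.2 (hsub _)]
    _ ≤ #(conflicts k G) * k := sum_card_bipartiteAbove_le _ fun p hp => by
        refine (card_le_card fun x hx => ?_).trans
          (hG p.1 (mem_product.1 (mem_filter.1 hp).1).1).2.le
        simp only [bipartiteBelow, conflictPairs, clausesWith, mem_filter, mem_product] at hx
        exact mem_clauseVars.2 ⟨_, hx.2.1.1.2⟩

theorem card_conflicts_le (hG : IsKFormula k G) (hs : SimpleFormula G) :
    #(conflicts k G) ≤
      (#(nonUnateSimplices k G) + #(missingSets k G) * Fintype.card V) * (k + 1) ^ 2 := by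
  -- the `k + 1` variables of a conflicting pair either carry a full simplex or miss a `k`-set
  have hsub : conflicts k G ⊆ (nonUnateSimplices k G).biUnion (fun S => S ×ˢ S) ∪
      (missingSets k G ×ˢ univ).biUnion fun Uv =>
        subformulaOn G (insert Uv.2 Uv.1) ×ˢ subformulaOn G (insert Uv.2 Uv.1) := by
    rintro ⟨C, C'⟩ hp
    obtain ⟨hCC', hT, x, b, hxC, hxC'⟩ := mem_filter.1 hp
    obtain ⟨hCG, hC'G⟩ := mem_product.1 hCC'
    set T := clauseVars C ∪ clauseVars C'
    have hC : C ∈ subformulaOn G T := mem_filter.2 ⟨hCG, subset_union_left⟩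
    have hC' : C' ∈ subformulaOn G T := mem_filter.2 ⟨hC'G, subset_union_right⟩
    by_cases hfull : powersetCard k T ⊆ G.image clauseVars
    · exact mem_union_left _ (mem_biUnion.2 ⟨_, subformulaOn_mem_nonUnateSimplices hG hs hT hfull
        hC hC' hxC hxC', mem_product.2 ⟨hC, hC'⟩⟩)
    · obtain ⟨U, hU, hUmiss⟩ := not_subset.1 hfull
      obtain ⟨hUT, hUk⟩ := mem_powersetCard.1 hU
      obtain ⟨v, hvT, hvU⟩ := exists_mem_notMem_of_card_lt_card (by omega : #U < #T)
      have hUv : insert v U = T := eq_of_subset_of_card_le (insert_subset hvT hUT)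
        (by rw [card_insert_of_notMem hvU, hUk, hT])
      have hUmiss' : U ∈ missingSets k G :=
        mem_sdiff.2 ⟨mem_powersetCard.2 ⟨subset_univ _, hUk⟩, hUmiss⟩
      refine mem_union_right _ (mem_biUnion.2
        ⟨(U, v), mem_product.2 ⟨hUmiss', mem_univ _⟩, ?_⟩)
      rw [hUv]
      exact mem_product.2 ⟨hC, hC'⟩
  refine (card_le_card hsub).trans ((card_union_le _ _).trans ?_)
  rw [add_mul, ← card_univ, ← card_product]
  refine add_le_add (card_biUnion_le_card_mul _ _ _ fun S hS => ?_)
    (card_biUnion_le_card_mul _ _ _ fun Uv hUv => ?_)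
  · rw [card_product, (mem_nonUnateSimplices.1 hS).2.2.1, sq]
  · have : #(subformulaOn G (insert Uv.2 Uv.1)) ≤ k + 1 := by
      refine (card_subformulaOn_le hG hs _).trans ?_
      rw [← Nat.choose_succ_self_right]
      exact Nat.choose_le_choose k ((card_insert_le _ _).trans
        (by rw [(mem_powersetCard.1 (mem_sdiff.1 (mem_product.1 hUv).1).1).2]))
    rw [card_product, sq]
    exact Nat.mul_le_mul this this

theorem sum_card_boundaryEdges_le (hG : IsKFormula k G) (f : V → Bool) :
    ∑ x, #(boundaryEdges k G x (f x)) ≤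
      #(missingSets k G) * k * (Fintype.card V * k) + #(conflicts k G) * k :=
  calc ∑ x, #(boundaryEdges k G x (f x))
      ≤ ∑ x, (#((missingSets k G).filter (x ∈ ·)) * (Fintype.card V * k) +
          #(conflictPairs k G x (f x))) := sum_le_sum fun x _ => card_boundaryEdges_le x (f x)
    _ ≤ _ := by
      rw [sum_add_distrib, ← sum_mul]
      gcongr
      exacts [sum_card_filter_mem_missingSets, sum_card_conflictPairs_le hG f]

theorem card_minorityClauses_sq_le [Nonempty V] (hk : 2 ≤ k) (hG : IsKFormula k G)
    (hs : SimpleFormula G) :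
    #(minorityClauses G) ^ 2 ≤ 2 * 4 ^ k * (k + 1) ^ 5 *
      (Fintype.card V ^ k * #(missingSets k G) +
        Fintype.card V ^ (k - 1) * #(nonUnateSimplices k G)) := by
  set n := Fintype.card V
  set m := minorityPolarity G
  have hD : #(minorityClauses G) ^ 2 ≤ n * ∑ x, #(clausesWith G (x, m x)) ^ 2 :=
    calc #(minorityClauses G) ^ 2 ≤ (∑ x, #(clausesWith G (x, m x))) ^ 2 :=
          Nat.pow_le_pow_left card_biUnion_le 2
      _ ≤ n * ∑ x, #(clausesWith G (x, m x)) ^ 2 := by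
          simpa using sq_sum_le_card_mul_sum_sq (s := univ)
            (f := fun x => #(clausesWith G (x, m x)))
  have hA (x : V) : #(clausesWith G (x, m x)) ^ 2 ≤
      #(boundaryEdges k G x (m x)) * (4 ^ k * #(smallPairs V (k - 2))) :=
    calc #(clausesWith G (x, m x)) ^ 2
        ≤ #(clausesWith G (x, m x)) * #(clausesWith G (x, !m x)) := by
          rw [sq]; exact Nat.mul_le_mul_left _ (card_clausesWith_minorityPolarity_le x)
      _ ≤ _ := card_mul_card_clausesWith_le hG hs x (m x)
  have hsum : ∑ x, #(clausesWith G (x, m x)) ^ 2 ≤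
      (∑ x, #(boundaryEdges k G x (m x))) * (4 ^ k * #(smallPairs V (k - 2))) := by
    rw [sum_mul]
    exact sum_le_sum fun x _ => hA x
  have hE := sum_card_boundaryEdges_le hG m
  have hC := card_conflicts_le hG hs
  have hP := card_smallPairs_le (V := V) (k - 2)
  obtain ⟨j, rfl⟩ : ∃ j, k = j + 2 := ⟨k - 2, by omega⟩
  simp only [Nat.add_sub_cancel, show j + 2 - 1 = j + 1 by omega] at hsum hP ⊢
  set a := #(missingSets (j + 2) G)
  set b := #(nonUnateSimplices (j + 2) G)
  calc #(minorityClauses G) ^ 2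
      ≤ n * ((a * (j + 2) * (n * (j + 2)) + (b + a * n) * (j + 3) ^ 2 * (j + 2)) *
          (4 ^ (j + 2) * ((j + 1) ^ 2 * n ^ j))) := by
        refine hD.trans (Nat.mul_le_mul_left _ (hsum.trans ?_))
        gcongr
        exact hE.trans (by gcongr)
    _ = 4 ^ (j + 2) * n ^ (j + 1) * ((j + 1) ^ 2 * (j + 2)) *
          (a * n * ((j + 2) + (j + 3) ^ 2) + b * (j + 3) ^ 2) := by ring
    _ ≤ 4 ^ (j + 2) * n ^ (j + 1) * (j + 3) ^ 3 * (2 * (j + 3) ^ 2 * (a * n + b)) := by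
        gcongr
        · nlinarith
        · nlinarith
    _ = _ := by ring

theorem card_missingSets_le_of_le_card (hG : IsKFormula k G) (hs : SimpleFormula G) {ε : ℝ}
    (hε : 0 ≤ ε) (hcard : (1 - ε) * ((Fintype.card V).choose k : ℝ) ≤ #G) :
    (#(missingSets k G) : ℝ) ≤ ε * Fintype.card V ^ k := by
  have hsum : (#(missingSets k G) : ℝ) + #G = (Fintype.card V).choose k := by
    exact_mod_cast card_missingSets_add_card hG hs
  have hchoose : ((Fintype.card V).choose k : ℝ) ≤ Fintype.card V ^ k := by
    exact_mod_cast Nat.choose_le_pow _ k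
  nlinarith

theorem card_minorityClauses_sq_le_of_le [Nonempty V] (hk : 2 ≤ k) (hG : IsKFormula k G)
    (hs : SimpleFormula G) {ε : ℝ}
    (hmiss : (#(missingSets k G) : ℝ) ≤ ε * Fintype.card V ^ k)
    (hsimp : (#(nonUnateSimplices k G) : ℝ) ≤ ε * Fintype.card V ^ (k + 1)) :
    (#(minorityClauses G) : ℝ) ^ 2 ≤
      2 * (2 * 4 ^ k * (k + 1) ^ 5) * ε * ((Fintype.card V : ℝ) ^ k) ^ 2 := by
  set n := Fintype.card V
  have hpow : (n : ℝ) ^ (k - 1) * n ^ (k + 1) = (n ^ k) ^ 2 := by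
    rw [← pow_add, ← pow_mul]
    congr 1
    omega
  calc (#(minorityClauses G) : ℝ) ^ 2
      ≤ 2 * 4 ^ k * (k + 1) ^ 5 * ((n : ℝ) ^ k * #(missingSets k G) +
          (n : ℝ) ^ (k - 1) * #(nonUnateSimplices k G)) := by
        exact_mod_cast card_minorityClauses_sq_le hk hG hs
    _ ≤ 2 * 4 ^ k * (k + 1) ^ 5 * (n ^ k * (ε * n ^ k) + n ^ (k - 1) * (ε * n ^ (k + 1))) := by
        gcongr
    _ = 2 * (2 * 4 ^ k * (k + 1) ^ 5) * ε * ((n : ℝ) ^ k) ^ 2 := by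
        rw [mul_left_comm _ ε (_ ^ (k + 1)), hpow]
        ring

end FiniteVariables

/-- Fix `k ≥ 2`. For every `ρ > 0` there exist `ε > 0`, `c > 0`, `n₀` such
that for all `n ≥ n₀`: every simple `k`-SAT formula on `n` variables with at least
`(1−ε)·C(n,k)` clauses that is `ρ`-far from unate contains at least `c·n^(k+1)` non-unate
simplex subformulae. -/
theorem far_from_unate_many_simplices (k : ℕ) (hk : 2 ≤ k) (ρ : ℝ) (hρ : 0 < ρ) :
    ∃ ε : ℝ, 0 < ε ∧ ∃ c : ℝ, 0 < c ∧ ∃ n₀ : ℕ, ∀ n ≥ n₀,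
      ∀ G : SatFormula (Fin n), IsKFormula k G → SimpleFormula G →
      (1 - ε) * (n.choose k : ℝ) ≤ G.card →
      (¬ ∃ D ⊆ G, (D.card : ℝ) ≤ ρ * n ^ k ∧ UnateFormula (G \ D)) →
      c * n ^ (k + 1) ≤
        (Set.ncard {S : SatFormula (Fin n) | S ⊆ G ∧ SimpleFormula S ∧
          S.card = k + 1 ∧ (formulaVars S).card = k + 1 ∧ ¬ UnateFormula S} : ℝ) := by
  set K : ℝ := 2 * 4 ^ k * (k + 1) ^ 5
  have hε : 0 < ρ ^ 2 / (2 * K) := by positivity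
  refine ⟨_, hε, _, hε, 1, fun n hn G hG hs hcard hfar => ?_⟩
  have : Nonempty (Fin n) := ⟨⟨0, hn⟩⟩
  have hset : {S : SatFormula (Fin n) | S ⊆ G ∧ SimpleFormula S ∧ #S = k + 1 ∧
      #(formulaVars S) = k + 1 ∧ ¬ UnateFormula S} = nonUnateSimplices k G := by
    ext S
    simp [mem_nonUnateSimplices]
  rw [hset, Set.ncard_coe_finset]
  by_contra! hfew
  have hD : ρ * n ^ k < #(minorityClauses G) := by
    by_contra! h
    exact hfar ⟨_, biUnion_subset.2 fun x _ => filter_subset _ _, h,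
      unateFormula_sdiff_minorityClauses⟩
  have hmiss := card_missingSets_le_of_le_card hG hs hε.le (by rwa [Fintype.card_fin])
  rw [Fintype.card_fin] at hmiss
  have hsq := card_minorityClauses_sq_le_of_le hk hG hs (by rwa [Fintype.card_fin]) (by
    rw [Fintype.card_fin]; exact hfew.le)
  rw [Fintype.card_fin, mul_div_cancel₀ _ (by positivity : 2 * K ≠ 0)] at hsq
  nlinarith [mul_pos hρ (pow_pos (Nat.cast_pos.2 hn) k)]
end

section
/- Let ℓ ≥ 2 be an integer. Every ℓ-uniform hypergraph H admits an orientation (a function assigning to each edge one of its vertices) such that for every set of ℓ−1 vertices {v_1,…,v_{ℓ−1}}, the number of edges of H that contain all of v_1,…,v_{ℓ−1} and are oriented at a vertex not in {v_1,…,v_{ℓ−1}} is at most ⌈ ((ℓ−1)!/(ℓ!)^{(ℓ−1)/ℓ}) · e(H)^{1/ℓ} ⌉, where e(H) is the number of edges of H. -/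
/-! Orienting an edge `e` at `u` assigns to `e` the `(ℓ-1)`-set `e.erase u` of its shadow, and
the edges counted at `S` are exactly those assigned to `S`. By Hall's theorem, applied with every
`(ℓ-1)`-set duplicated `T` times, an assignment putting at most `T` edges on each set exists as
soon as `#𝒮 ≤ T * #(∂ 𝒮)` for every subfamily `𝒮` of `H`.

Lovász's form of the Kruskal–Katona theorem (proved by shifting towards a vertex and inducting on
its link) says that `#𝒮 = choose x ℓ` forces `#(∂ 𝒮) ≥ choose x (ℓ-1)`. Since
`ℓ * choose x ℓ = (x - ℓ + 1) * choose x (ℓ-1)` and `(x - ℓ + 1) ^ ℓ ≤ ℓ! * #𝒮`, this gives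
`ℓ * #𝒮 ≤ (ℓ! * #H) ^ (1/ℓ) * #(∂ 𝒮)`, and `(ℓ! * #H) ^ (1/ℓ) ≤ ℓ * T` for the `T` of the theorem.
-/

open Finset FinsetFamily Polynomial
open scoped Nat

namespace Ring

lemma choose_real_eq_descPochhammer_eval_div (x : ℝ) (k : ℕ) :
    choose x k = (descPochhammer ℝ k).eval x / k ! := by
  rw [eq_div_iff (by positivity), mul_comm, ← nsmul_eq_mul,
    ← descPochhammer_eq_factorial_smul_choose, ← aeval_eq_smeval, ← eval_map_algebraMap,
    descPochhammer_map]

lemma choose_real_nonneg {x : ℝ} {k : ℕ} (hx : (k : ℝ) - 1 ≤ x) : 0 ≤ choose x k := by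
  rw [choose_real_eq_descPochhammer_eval_div]
  exact div_nonneg (descPochhammer_nonneg hx) (by positivity)

lemma monotoneOn_choose_real (k : ℕ) :
    MonotoneOn (fun x : ℝ => choose x k) (Set.Ici ((k : ℝ) - 1)) := by
  intro a ha b hb hab
  simp only [choose_real_eq_descPochhammer_eval_div]
  gcongr
  exact monotoneOn_descPochhammer_eval k ha hb hab

lemma continuous_choose_real (k : ℕ) : Continuous (fun x : ℝ => choose x k) := by
  simp only [choose_real_eq_descPochhammer_eval_div]
  fun_prop

lemma choose_real_succ_mul (x : ℝ) (k : ℕ) :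
    choose x (k + 1) * (k + 1) = choose x k * (x - k) := by
  simp only [choose_real_eq_descPochhammer_eval_div, descPochhammer_succ_eval, Nat.factorial_succ]
  push_cast
  field_simp

lemma pow_le_factorial_mul_choose_real {x : ℝ} {k : ℕ} (hx : (k : ℝ) - 1 ≤ x) :
    (x - k + 1) ^ k ≤ k ! * choose x k := by
  rw [choose_real_eq_descPochhammer_eval_div, mul_div_cancel₀ _ (by positivity)]
  exact pow_le_descPochhammer_eval hx

end Ring

namespace Finset
variable {α : Type*} [DecidableEq α] {𝒜 : Finset (Finset α)} {a : α} {r : ℕ}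

lemma card_le_card_shadow_of_mem {s : Finset α} (hs : s ∈ 𝒜) : #s ≤ #(∂ 𝒜) := by
  rw [← card_image_of_injOn (erase_injOn s)]
  exact card_le_card fun t ht => by
    obtain ⟨u, hu, rfl⟩ := mem_image.1 ht
    exact erase_mem_shadow hs hu

lemma _root_.Set.Sized.memberSubfamily (h𝒜 : (𝒜 : Set (Finset α)).Sized (r + 1)) :
    (𝒜.memberSubfamily a : Set (Finset α)).Sized r := by
  intro s hs
  rw [mem_coe, mem_memberSubfamily] at hs
  have := h𝒜 hs.1
  rw [card_insert_of_notMem hs.2] at this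
  omega

lemma memberSubfamily_subset_nonMemberSubfamily_shadow :
    𝒜.memberSubfamily a ⊆ (∂ 𝒜).nonMemberSubfamily a := by
  intro s hs
  rw [mem_memberSubfamily] at hs
  rw [mem_nonMemberSubfamily, ← erase_insert hs.2]
  exact ⟨erase_mem_shadow hs.1 (mem_insert_self a s), notMem_erase _ _⟩

lemma shadow_memberSubfamily_subset_memberSubfamily_shadow :
    ∂ (𝒜.memberSubfamily a) ⊆ (∂ 𝒜).memberSubfamily a := by
  intro t ht
  obtain ⟨s, hs, u, hu, rfl⟩ := mem_shadow_iff.1 ht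
  rw [mem_memberSubfamily] at hs ⊢
  have hua : u ≠ a := ne_of_mem_of_not_mem hu hs.2
  refine ⟨?_, fun ha => hs.2 (mem_of_mem_erase ha)⟩
  rw [← erase_insert_of_ne hua.symm]
  exact erase_mem_shadow hs.1 (mem_insert_of_mem hu)

lemma card_memberSubfamily_add_card_shadow_memberSubfamily_le (a : α)
    (𝒜 : Finset (Finset α)) :
    #(𝒜.memberSubfamily a) + #(∂ (𝒜.memberSubfamily a)) ≤ #(∂ 𝒜) := by
  rw [← card_memberSubfamily_add_card_nonMemberSubfamily a (∂ 𝒜), add_comm]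
  exact _root_.add_le_add (card_le_card shadow_memberSubfamily_subset_memberSubfamily_shadow)
    (card_le_card memberSubfamily_subset_nonMemberSubfamily_shadow)

def IsShiftedTo (a : α) (𝒜 : Finset (Finset α)) : Prop :=
  ∀ s ∈ 𝒜, a ∉ s → ∀ u ∈ s, insert a (s.erase u) ∈ 𝒜

lemma _root_.UV.compress_singleton_singleton {u : α} {s : Finset α} (ha : a ∉ s) (hu : u ∈ s) :
    UV.compress {a} {u} s = insert a (s.erase u) := by
  rw [UV.compress_of_disjoint_of_le (disjoint_singleton_left.2 ha) (singleton_subset_iff.2 hu)]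
  have hua : u ≠ a := ne_of_mem_of_not_mem hu ha
  ext b
  simp only [sup_eq_union, mem_sdiff, mem_union, mem_singleton, mem_insert, mem_erase]
  grind

lemma isShiftedTo_of_forall_isCompressed (h : ∀ u, UV.IsCompressed {a} {u} 𝒜) :
    IsShiftedTo a 𝒜 := fun s hs ha u hu => by
  simpa [(h u).eq, UV.compress_singleton_singleton ha hu] using
    UV.compress_mem_compression (u := {a}) (v := {u}) hs

lemma nonMemberSubfamily_compression_ssubset {u : α} (h : UV.compression {a} {u} 𝒜 ≠ 𝒜) :
    (UV.compression {a} {u} 𝒜).nonMemberSubfamily a ⊂ 𝒜.nonMemberSubfamily a := by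
  refine ssubset_iff_subset_ne.2 ⟨fun s hs => ?_, fun heq => ?_⟩
  · rw [mem_nonMemberSubfamily] at hs ⊢
    refine ⟨?_, hs.2⟩
    by_contra hs𝒜
    exact hs.2 (singleton_subset_iff.1 (UV.le_of_mem_compression_of_notMem hs.1 hs𝒜))
  · obtain ⟨s, hs, hsC⟩ := not_subset.1 fun hsub : 𝒜 ⊆ UV.compression {a} {u} 𝒜 =>
      h (eq_of_subset_of_card_le hsub (UV.card_compression _ _ _).le).symm
    have has : a ∉ s := fun has => hsC <| UV.mem_compression.2 <| .inl
      ⟨hs, by rwa [UV.compress, if_neg fun hc => disjoint_singleton_left.1 hc.1 has]⟩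
    exact hsC (mem_of_mem_filter s (heq ▸ mem_nonMemberSubfamily.2 ⟨hs, has⟩ :))

lemma exists_isShiftedTo (a : α) {𝒜 : Finset (Finset α)}
    (h𝒜 : (𝒜 : Set (Finset α)).Sized r) :
    ∃ ℬ : Finset (Finset α), #(∂ ℬ) ≤ #(∂ 𝒜) ∧ #ℬ = #𝒜 ∧
      (ℬ : Set (Finset α)).Sized r ∧ IsShiftedTo a ℬ := by
  by_cases hc : ∀ u, UV.IsCompressed {a} {u} 𝒜
  · exact ⟨𝒜, le_rfl, rfl, h𝒜, isShiftedTo_of_forall_isCompressed hc⟩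
  obtain ⟨u, hu⟩ := not_forall.1 hc
  have := card_lt_card (nonMemberSubfamily_compression_ssubset hu)
  obtain ⟨ℬ, hℬsh, hℬcard, hℬr, hℬ⟩ :=
    exists_isShiftedTo a (h𝒜.uvCompression (u := {a}) (v := {u}) rfl)
  refine ⟨ℬ, hℬsh.trans <| UV.card_shadow_compression_le _ _ fun x hx =>
    ⟨u, mem_singleton_self u, ?_⟩, hℬcard.trans (UV.card_compression _ _ _), hℬr, hℬ⟩
  rw [mem_singleton.1 hx, erase_singleton, erase_singleton]
  exact UV.isCompressed_self _ _
termination_by #(𝒜.nonMemberSubfamily a)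

lemma IsShiftedTo.shadow_nonMemberSubfamily_subset (h : IsShiftedTo a 𝒜) :
    ∂ (𝒜.nonMemberSubfamily a) ⊆ 𝒜.memberSubfamily a := by
  intro t ht
  obtain ⟨s, hs, u, hu, rfl⟩ := mem_shadow_iff.1 ht
  rw [mem_nonMemberSubfamily] at hs
  exact mem_memberSubfamily.2 ⟨h s hs.1 hs.2 u hu, fun has => hs.2 (mem_of_mem_erase has)⟩

lemma IsShiftedTo.memberSubfamily_nonempty (h : IsShiftedTo a 𝒜) (hne : 𝒜.Nonempty)
    (h𝒜 : ∀ s ∈ 𝒜, s.Nonempty) : (𝒜.memberSubfamily a).Nonempty := by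
  obtain ⟨s, hs⟩ := hne
  by_cases has : a ∈ s
  · exact ⟨s.erase a, mem_memberSubfamily.2 ⟨by rwa [insert_erase has], notMem_erase _ _⟩⟩
  · obtain ⟨u, hu⟩ := h𝒜 s hs
    exact ⟨s.erase u, mem_memberSubfamily.2
      ⟨h s hs has u hu, fun ha => has (mem_of_mem_erase ha)⟩⟩

lemma choose_le_card_shadow_of_memberSubfamily {k : ℕ} {x : ℝ}
    (h₁ : Ring.choose (x - 1) (k + 1) ≤ #(𝒜.memberSubfamily a))
    (h₂ : Ring.choose (x - 1) k ≤ #(∂ (𝒜.memberSubfamily a))) :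
    Ring.choose x (k + 1) ≤ #(∂ 𝒜) := by
  have hpascal := Ring.choose_succ_succ (x - 1) k
  rw [sub_add_cancel] at hpascal
  have : ((#(𝒜.memberSubfamily a) + #(∂ (𝒜.memberSubfamily a)) : ℕ) : ℝ) ≤ #(∂ 𝒜) := by
    exact_mod_cast card_memberSubfamily_add_card_shadow_memberSubfamily_le a 𝒜
  push_cast at this
  linarith

lemma choose_sub_one_lt_card_nonMemberSubfamily {k : ℕ} {x : ℝ}
    (h : Ring.choose x (k + 1) ≤ #𝒜) (h₁ : #(𝒜.memberSubfamily a) < Ring.choose (x - 1) k) :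
    Ring.choose (x - 1) (k + 1) < #(𝒜.nonMemberSubfamily a) := by
  have hpascal := Ring.choose_succ_succ (x - 1) k
  rw [sub_add_cancel] at hpascal
  have : ((#(𝒜.memberSubfamily a) + #(𝒜.nonMemberSubfamily a) : ℕ) : ℝ) = #𝒜 := by
    exact_mod_cast card_memberSubfamily_add_card_nonMemberSubfamily a 𝒜
  push_cast at this
  linarith

lemma choose_le_card_shadow_of_le_succ {k : ℕ} (h𝒜 : (𝒜 : Set (Finset α)).Sized (k + 1))
    (hne : 𝒜.Nonempty) {x : ℝ} (hx : (k : ℝ) - 1 ≤ x) (hxk : x ≤ k + 1) :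
    Ring.choose x k ≤ #(∂ 𝒜) := by
  obtain ⟨s, hs⟩ := hne
  calc Ring.choose x k ≤ Ring.choose ((k + 1 : ℕ) : ℝ) k :=
        Ring.monotoneOn_choose_real k hx (by simp only [Set.mem_Ici]; push_cast; linarith)
          (by push_cast; exact hxk)
    _ = #s := by rw [Ring.choose_natCast, Nat.choose_succ_self_right, h𝒜 hs]
    _ ≤ #(∂ 𝒜) := by exact_mod_cast card_le_card_shadow_of_mem hs

/-- Lovász's version of the Kruskal–Katona theorem. -/
theorem choose_le_card_shadow {k : ℕ} (h𝒜 : (𝒜 : Set (Finset α)).Sized (k + 1))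
    (hne : 𝒜.Nonempty) {x : ℝ} (hx : (k : ℝ) ≤ x) (h : Ring.choose x (k + 1) ≤ #𝒜) :
    Ring.choose x k ≤ #(∂ 𝒜) := by
  induction k generalizing 𝒜 x with
  | zero =>
    obtain ⟨s, hs⟩ := hne
    rw [Ring.choose_zero_right]
    exact_mod_cast (h𝒜 hs).symm.le.trans (card_le_card_shadow_of_mem hs)
  | succ k ih =>
    induction hn : #𝒜 using Nat.strong_induction_on generalizing 𝒜 x with
    | _ n ihn =>
    subst hn
    push_cast at hx
    rcases le_or_gt x (k + 2) with hxs | hxs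
    · exact choose_le_card_shadow_of_le_succ h𝒜 hne (by push_cast; linarith)
        (by push_cast; linarith)
    obtain ⟨s, hs⟩ := hne
    obtain ⟨a, -⟩ : s.Nonempty := card_pos.1 (by rw [h𝒜 hs]; omega)
    obtain ⟨ℬ, hℬsh, hℬcard, hℬr, hℬ⟩ := exists_isShiftedTo a h𝒜
    have hM : (ℬ.memberSubfamily a).Nonempty := hℬ.memberSubfamily_nonempty
      (card_pos.1 (hℬcard ▸ card_pos.2 ⟨s, hs⟩)) fun t ht => card_pos.1 (by rw [hℬr ht]; omega)
    by_cases hcase : Ring.choose (x - 1) (k + 1) ≤ #(ℬ.memberSubfamily a)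
    · refine (choose_le_card_shadow_of_memberSubfamily hcase ?_).trans (by exact_mod_cast hℬsh)
      exact ih hℬr.memberSubfamily hM (by linarith) hcase
    -- Otherwise the non-members of `a` form a smaller family whose shadow, by induction, is too
    -- large to fit into the link of `a`.
    · have hN := choose_sub_one_lt_card_nonMemberSubfamily (hℬcard ▸ h) (not_le.1 hcase)
      have hNne : (ℬ.nonMemberSubfamily a).Nonempty := card_pos.1 <| by
        exact_mod_cast (Ring.choose_real_nonneg (by push_cast; linarith)).trans_lt hN
      have hNlt : #(ℬ.nonMemberSubfamily a) < #𝒜 := by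
        have := card_memberSubfamily_add_card_nonMemberSubfamily a ℬ
        have := card_pos.2 hM
        omega
      have hNshadow := ihn _ hNlt (hℬr.mono (filter_subset _ _)) hNne (by push_cast; linarith)
        hN.le rfl
      have hlink : #(∂ (ℬ.nonMemberSubfamily a)) ≤ #(ℬ.memberSubfamily a) :=
        card_le_card hℬ.shadow_nonMemberSubfamily_subset
      exact absurd (hNshadow.trans (by exact_mod_cast hlink)) hcase

lemma card_mul_le_mul_card_shadow (h𝒜 : (𝒜 : Set (Finset α)).Sized r)
    {y : ℝ} (hy : 0 ≤ y) (h : (r ! : ℝ) * #𝒜 ≤ y ^ r) : (r : ℝ) * #𝒜 ≤ y * #(∂ 𝒜) := by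
  rcases r with _ | k
  · simpa using mul_nonneg hy (Nat.cast_nonneg _)
  rcases 𝒜.eq_empty_or_nonempty with rfl | hne
  · simp
  obtain ⟨x, ⟨hkx, hxy⟩, hx⟩ : ∃ x ∈ Set.Icc (k : ℝ) (k + y), Ring.choose x (k + 1) = #𝒜 := by
    refine intermediate_value_Icc (by linarith) (Ring.continuous_choose_real _).continuousOn
      ⟨?_, ?_⟩
    · rw [Ring.choose_natCast, Nat.choose_succ_self, Nat.cast_zero]
      positivity
    · have := Ring.pow_le_factorial_mul_choose_real (x := k + y) (k := k + 1)
        (by push_cast; linarith)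
      push_cast at this h ⊢
      rw [show (k : ℝ) + y - (k + 1) + 1 = y by ring] at this
      exact le_of_mul_le_mul_left (h.trans this) (by positivity)
  calc ((k + 1 : ℕ) : ℝ) * #𝒜 = Ring.choose x k * (x - k) := by
        rw [← hx, ← Ring.choose_real_succ_mul]; push_cast; ring
    _ ≤ #(∂ 𝒜) * y := mul_le_mul (choose_le_card_shadow h𝒜 hne hkx hx.le) (by linarith)
        (by linarith) (Nat.cast_nonneg _)
    _ = y * #(∂ 𝒜) := mul_comm _ _

end Finset

lemma exists_orientation_of_card_le_mul_card_shadow {V : Type*} [DecidableEq V]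
    (H : Finset (Finset V)) (T : ℕ) (hH : ∀ 𝒮 ⊆ H, #𝒮 ≤ T * #(∂ 𝒮)) :
    ∃ f : H → V, (∀ e, f e ∈ e.1) ∧ ∀ S, #{e ∈ H.attach | e.1.erase (f e) = S} ≤ T := by
  let t : H → Finset (Finset V × Fin T) := fun e => ∂ {e.1} ×ˢ univ
  have hall : ∀ s : Finset H, #s ≤ #(s.biUnion t) := by
    intro s
    have : s.biUnion t = ∂ (s.image Subtype.val) ×ˢ univ := by
      ext ⟨S, i⟩
      simp [t, mem_shadow_iff]
    rw [this, card_product, card_univ, Fintype.card_fin, mul_comm,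
      ← card_image_of_injective s Subtype.val_injective]
    exact hH _ fun e he => by obtain ⟨e, -, rfl⟩ := mem_image.1 he; exact e.2
  obtain ⟨g, hg, hgt⟩ := (all_card_le_biUnion_card_iff_exists_injective t).1 hall
  have hshadow : ∀ e : H, ∃ u ∈ e.1, e.1.erase u = (g e).1 := fun e => by
    simpa [t, mem_shadow_iff] using (mem_product.1 (hgt e)).1
  choose f hf hfg using hshadow
  refine ⟨f, hf, fun S => ?_⟩
  calc #{e ∈ H.attach | e.1.erase (f e) = S} ≤ #(univ : Finset (Fin T)) := by
        refine card_le_card_of_injOn (fun e => (g e).2) (fun _ _ => mem_univ _) ?_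
        intro e he e' he' hee'
        simp only [coe_filter, Set.mem_ofPred_eq] at he he'
        exact hg (Prod.ext (by rw [← hfg, ← hfg, he.2, he'.2]) hee')
    _ = T := by simp

lemma factorial_mul_le_pow_mul_ceil {ℓ : ℕ} (hℓ : ℓ ≠ 0) {m : ℝ} (hm : 0 ≤ m) :
    (ℓ ! : ℝ) * m ≤ (ℓ * ⌈((ℓ - 1)! : ℝ) / (ℓ ! : ℝ) ^ (((ℓ : ℝ) - 1) / ℓ) *
      m ^ ((1 : ℝ) / ℓ)⌉₊) ^ ℓ := by
  have hfac : (0 : ℝ) < ℓ ! := by positivity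
  have hroot : (ℓ ! : ℝ) / (ℓ ! : ℝ) ^ (((ℓ : ℝ) - 1) / ℓ) = (ℓ ! : ℝ) ^ ((1 : ℝ) / ℓ) := by
    conv_lhs => enter [1]; rw [← Real.rpow_one (ℓ ! : ℝ)]
    rw [← Real.rpow_sub hfac]
    congr 1
    field_simp
    ring
  have key : (ℓ : ℝ) * (((ℓ - 1)! : ℝ) / (ℓ ! : ℝ) ^ (((ℓ : ℝ) - 1) / ℓ) *
      m ^ ((1 : ℝ) / ℓ)) = (ℓ ! * m) ^ ((1 : ℝ) / ℓ) := by
    rw [Real.mul_rpow hfac.le hm, ← hroot, ← Nat.mul_factorial_pred hℓ]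
    push_cast
    ring
  calc (ℓ ! : ℝ) * m = ((ℓ ! * m) ^ ((1 : ℝ) / ℓ)) ^ ℓ := by
        rw [one_div, Real.rpow_inv_natCast_pow (by positivity) hℓ]
    _ ≤ _ := by
      rw [← key]
      gcongr
      exact Nat.le_ceil _

/-- Every `ℓ`-uniform hypergraph `H` admits an orientation such that for
every set `S` of `ℓ−1` vertices, the number of edges of `H` containing `S` and oriented at a
vertex outside `S` is at most `⌈((ℓ−1)!/(ℓ!)^((ℓ−1)/ℓ))·e(H)^(1/ℓ)⌉`. -/
theorem hypergraph_orientation (ℓ : ℕ) (hℓ : 2 ≤ ℓ) {V : Type*} [DecidableEq V]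
    (H : Finset (Finset V)) (hunif : ∀ e ∈ H, e.card = ℓ) :
    ∃ f : {e : Finset V // e ∈ H} → V, (∀ e : {e : Finset V // e ∈ H}, f e ∈ e.1) ∧
      ∀ S : Finset V, S.card = ℓ - 1 →
        (H.attach.filter (fun e => S ⊆ e.1 ∧ f e ∉ S)).card ≤
          ⌈((Nat.factorial (ℓ - 1) : ℝ) / (Nat.factorial ℓ : ℝ) ^ (((ℓ : ℝ) - 1) / ℓ)) *
            (H.card : ℝ) ^ ((1 : ℝ) / ℓ)⌉₊ := by
  have hℓ0 : ℓ ≠ 0 := by omega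
  have hH : ∀ 𝒮 ⊆ H, #𝒮 ≤ ⌈((ℓ - 1)! : ℝ) / (ℓ ! : ℝ) ^ (((ℓ : ℝ) - 1) / ℓ) *
      (#H : ℝ) ^ ((1 : ℝ) / ℓ)⌉₊ * #(∂ 𝒮) := by
    intro 𝒮 h𝒮
    have hmul := card_mul_le_mul_card_shadow (fun e he => hunif e (h𝒮 he))
      (by positivity) <| calc
        (ℓ ! : ℝ) * #𝒮 ≤ ℓ ! * #H := by gcongr
        _ ≤ _ := factorial_mul_le_pow_mul_ceil hℓ0 (Nat.cast_nonneg _)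
    rw [mul_assoc] at hmul
    exact_mod_cast le_of_mul_le_mul_left hmul (by positivity)
  obtain ⟨f, hf, hfS⟩ := exists_orientation_of_card_le_mul_card_shadow H _ hH
  refine ⟨f, hf, fun S hS => (card_le_card fun e he => ?_).trans (hfS S)⟩
  rw [mem_filter] at he ⊢
  refine ⟨he.1, (eq_of_subset_of_card_le (subset_erase.2 he.2) ?_).symm⟩
  rw [card_erase_of_mem (hf e), hunif _ e.2, hS]
end
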